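/- Let M be a properly immersed translator in H²×ℝ with (possibly empty) compact boundary whose vertical asymptotic boundary ∂_∞^v M is a proper family of disjoint immersed continuous curves, let γ be a connected component of ∂_∞^v M with M ∪ γ a continuous surface with boundary, and let (p,t) ∈ γ be a point such that {(p,t)} = γ ∩ ({p}×(t−ρ, t+ρ)) for some ρ > 0. Fix ν > 0 with the Euclidean distance between ∂M and the boundary cylinder ∂_∞H²×ℝ greater than ν, and choose ε₁ > 0 and δ ∈ (0,ρ) such that for every ε ≤ ε₁ the component γ_ε of the asymptotic boundary of M_ε containing (p,t) is the only component of ∂_∞^v M meeting the closed slab ∂_∞H²×[t−δ, t+δ], where M_ε is the connected component of M ∩ 𝒮̃(p,ε) containing (p,t) in its asymptotic boundary. Then there exists 0 < ε̄ < ε₁ such that M_ε̄ ⊂ H²×(t−δ, t+δ); in particular, γ_ε̄ is the asymptotic boundary of M_ε̄ and γ_ε̄ ⊂ 𝒮̃(p,ε̄) ∩ (H²×(t−δ, t+δ)). -/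

import Mathlib

/-!
Common background for formalizing statements about translators of the mean curvature flow
in `ℍ² × ℝ`.

We use the Poincaré disc model: `H2` is the open unit disc in `ℂ` with the hyperbolic
distance `hdist`, the circle at infinity `∂∞ℍ²` is the unit circle of `ℂ`, and the geodesic
compactification of `ℍ² × ℝ` is modeled inside `ℂ × EReal` via the embedding `emb`.

The genuinely differential-geometric notions (smooth immersed surfaces-with-boundary,
their mean curvature with respect to an ambient Riemannian metric, unit normals, conormals,
tangency, convexity, completeness, properness of the immersion, …), which are not available
in Mathlib, are bundled as the abstract background structure `GeomBackground`.
The translator equation `H = ⟨N, ∂ₕ⟩` itself is then a genuine definition (`IsTranslator`),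
stated with the explicit product Riemannian metric `gmet` of `ℍ² × ℝ` and the vertical unit
vector field `∂ₕ = (0,1)`.
-/

noncomputable section

open Set Filter Topology

/-- The hyperbolic plane `ℍ²`, in the Poincaré disc model. -/
abbrev H2 : Type := {z : ℂ // ‖z‖ < 1}

/-- Inverse hyperbolic cosine. -/
def arcosh (x : ℝ) : ℝ := Real.log (x + Real.sqrt (x ^ 2 - 1))

/-- The hyperbolic distance in the Poincaré disc model. -/
def hdist (z w : H2) : ℝ :=
  arcosh (1 + 2 * ‖(z : ℂ) - (w : ℂ)‖ ^ 2 / ((1 - ‖(z : ℂ)‖ ^ 2) * (1 - ‖(w : ℂ)‖ ^ 2)))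

/-- Hyperbolic distance from a point to a set. -/
def hdistToSet (z : H2) (A : Set H2) : ℝ := sInf (hdist z '' A)

/-- A subset of `ℍ²` is a complete geodesic if it is the image of a global unit-speed
isometric parametrisation by `ℝ`. -/
def IsCompleteGeodesic (Γ : Set H2) : Prop :=
  ∃ γ : ℝ → H2, (∀ s t : ℝ, hdist (γ s) (γ t) = |s - t|) ∧ Γ = Set.range γ

/-- A complete geodesic of `ℍ²` with prescribed ideal endpoints `a`, `b` on the circle at
infinity. -/
def IsGeodesicWithEnds (Γ : Set H2) (a b : ℂ) : Prop :=
  ∃ γ : ℝ → H2, (∀ s t : ℝ, hdist (γ s) (γ t) = |s - t|) ∧ Γ = Set.range γ ∧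
    Tendsto (fun t => (γ t : ℂ)) atTop (nhds a) ∧
    Tendsto (fun t => (γ t : ℂ)) atBot (nhds b)

/-- `C` is a connected component of the subset `S`. -/
def IsConnCompOf {X : Type*} [TopologicalSpace X] (C S : Set X) : Prop :=
  ∃ x ∈ S, C = connectedComponentIn S x

/-- The asymptotic boundary (on the circle at infinity of `ℍ²`) of a planar domain. -/
def circleBdryOf (D : Set H2) : Set ℂ :=
  {z : ℂ | ‖z‖ = 1 ∧ z ∈ closure ((fun w : H2 => (w : ℂ)) '' D)}

/-- The space in which the geodesic compactification of `ℍ² × ℝ` is modeled. -/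
abbrev CPT : Type := ℂ × EReal

/-- The embedding of `ℍ² × ℝ` into the compactification model. -/
def emb (p : H2 × ℝ) : CPT := ((p.1 : ℂ), (p.2 : EReal))

/-- The asymptotic boundary of a subset of `ℍ² × ℝ`: all points at infinity of the geodesic
compactification that are limits of sequences (equivalently, adherent points) of the set. -/
def asympBdry (A : Set (H2 × ℝ)) : Set CPT := closure (emb '' A) \ Set.range emb

/-- `⊤ : EReal` for the `+∞` end (`s = true`), `⊥ : EReal` for the `-∞` end (`s = false`). -/
def sgnInfty (s : Bool) : EReal := if s then (⊤ : EReal) else (⊥ : EReal)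

/-- The vertical asymptotic boundary: asymptotic points at finite height,
lying on `∂∞ℍ² × ℝ`. -/
def vBdry (A : Set (H2 × ℝ)) : Set CPT :=
  asympBdry A ∩ {q : CPT | ‖q.1‖ = 1 ∧ q.2 ≠ ⊤ ∧ q.2 ≠ ⊥}

/-- The horizontal asymptotic boundary `∂∞^± A ⊆ ℍ² × {±∞}`. -/
def hBdry (A : Set (H2 × ℝ)) (s : Bool) : Set CPT :=
  asympBdry A ∩ {q : CPT | ‖q.1‖ < 1 ∧ q.2 = sgnInfty s}

/-- The corner asymptotic boundary `∂∞^{c,±} A ⊆ ∂∞ℍ² × {±∞}`. -/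
def cBdry (A : Set (H2 × ℝ)) (s : Bool) : Set CPT :=
  asympBdry A ∩ {q : CPT | ‖q.1‖ = 1 ∧ q.2 = sgnInfty s}

/-- The vertical line `l_p = {p} × ℝ ⊆ ∂∞ℍ² × ℝ` at a point `p` at infinity. -/
def vline (p : ℂ) : Set CPT := {q : CPT | q.1 = p ∧ ∃ t : ℝ, q.2 = (t : EReal)}

/-- The vertical half-line `{p} × [T, ∞) ⊆ ∂∞ℍ² × ℝ`. -/
def vray (p : ℂ) (T : ℝ) : Set CPT :=
  {q : CPT | q.1 = p ∧ ∃ t : ℝ, T ≤ t ∧ q.2 = (t : EReal)}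

/-- The copy of a planar set `Γ ⊆ ℍ²` inside the horizontal boundary `ℍ² × {±∞}`. -/
def levelSet (Γ : Set H2) (s : Bool) : Set CPT := (fun z : H2 => ((z : ℂ), sgnInfty s)) '' Γ

/-- Boundedness of a subset of the horizontal boundary `ℍ² × {±∞}` (equivalently, it stays
in a compact part of the open disc). -/
def BoundedInDisc (A : Set CPT) : Prop := ∃ r : ℝ, r < 1 ∧ ∀ q ∈ A, ‖q.1‖ ≤ r

/-- An immersed continuous curve: the image of a nonempty interval under a continuous,
locally injective map. -/
def IsImmersedContinuousCurve (C : Set CPT) : Prop :=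
  ∃ (J : Set ℝ) (γ : ℝ → CPT), IsPreconnected J ∧ J.Nonempty ∧ ContinuousOn γ J ∧
    (∀ x ∈ J, ∃ ε : ℝ, 0 < ε ∧ Set.InjOn γ (J ∩ Set.Ioo (x - ε) (x + ε))) ∧ C = γ '' J

/-- `S` is a proper family of disjoint immersed continuous curves. -/
def IsProperFamilyOfDisjointCurves (S : Set CPT) : Prop :=
  ∃ (ι : Type) (C : ι → Set CPT), (∀ i, IsImmersedContinuousCurve (C i)) ∧
    Pairwise (Function.onFun Disjoint C) ∧ (⋃ i, C i) = S ∧ LocallyFinite C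

/-- `X` is a continuous (topological) surface with boundary: each point has a neighborhood
in `X` homeomorphic to the plane or to a closed half-plane. -/
def IsTopSurfaceWithBoundary (X : Set CPT) : Prop :=
  ∀ x ∈ X, ∃ U : Set CPT, IsOpen U ∧ x ∈ U ∧
    (Nonempty ((X ∩ U : Set CPT) ≃ₜ (ℝ × ℝ)) ∨
      Nonempty ((X ∩ U : Set CPT) ≃ₜ {v : ℝ × ℝ // 0 ≤ v.2}))

/-- A properly embedded arc inside the horizontal boundary `ℍ² × {±∞}`: an injective
continuous image of an interval which is closed in `ℍ² × {±∞}`. -/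
def IsProperlyEmbeddedArcAtLevel (A : Set CPT) (s : Bool) : Prop :=
  (∃ (J : Set ℝ) (c : ℝ → CPT), IsPreconnected J ∧ J.Nonempty ∧ ContinuousOn c J ∧
    Set.InjOn c J ∧ A = c '' J) ∧
  A ⊆ {q : CPT | ‖q.1‖ < 1 ∧ q.2 = sgnInfty s} ∧
  closure A ∩ {q : CPT | ‖q.1‖ < 1 ∧ q.2 = sgnInfty s} ⊆ A

/-- A geodesic arc inside the horizontal boundary `ℍ² × {±∞}`: the image of an interval
under a unit-speed geodesic parametrisation, placed at height `±∞`. -/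
def IsGeodesicArcAtLevel (A : Set CPT) (s : Bool) : Prop :=
  ∃ (γ : ℝ → H2) (J : Set ℝ), (∀ u v : ℝ, hdist (γ u) (γ v) = |u - v|) ∧
    IsPreconnected J ∧ A = (fun u : ℝ => ((γ u : ℂ), sgnInfty s)) '' J

/-- The product Riemannian metric `⟨·,·⟩` of `ℍ² × ℝ` at the point `p`, where tangent
vectors of `ℍ² × ℝ` are modeled on `ℂ × ℝ` (Poincaré disc metric plus Euclidean factor). -/
def gmet (p : H2 × ℝ) (X Y : ℂ × ℝ) : ℝ :=
  (4 / (1 - ‖(p.1 : ℂ)‖ ^ 2) ^ 2) * (X.1 * (starRingEnd ℂ) Y.1).re + X.2 * Y.2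

/-- The conformally changed metric `e^h ⟨·,·⟩`, where `h` is the height function. -/
def gmetConf (p : H2 × ℝ) (X Y : ℂ × ℝ) : ℝ := Real.exp p.2 * gmet p X Y

/-- Abstract differential-geometric background: smooth immersed surfaces-with-boundary in
`ℍ² × ℝ` together with the geometric notions attached to them (mean curvature and unit
normal with respect to an arbitrary ambient Riemannian metric, conormals, tangency, …). -/
structure GeomBackground where
  /-- the type of smooth immersed surfaces-with-boundary in `ℍ² × ℝ` -/
  Surface : Type
  /-- the underlying point set (image) of a surface -/
  carrier : Surface → Set (H2 × ℝ)
  /-- the (finite) boundary `∂S` of a surface -/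
  bdry : Surface → Set (H2 × ℝ)
  bdry_subset : ∀ S, bdry S ⊆ carrier S
  carrier_nonempty : ∀ S, (carrier S).Nonempty
  /-- the surface is complete -/
  IsComplete : Surface → Prop
  /-- the immersion is proper -/
  IsProperlyImmersed : Surface → Prop
  /-- the surface is properly embedded -/
  IsProperlyEmbedded : Surface → Prop
  /-- the surface is connected -/
  IsConnectedSurface : Surface → Prop
  /-- `meanCurvature g S p`: the mean curvature of `S` at `p ∈ S`, computed with respect to
  the ambient Riemannian metric `g` on `ℍ² × ℝ` (e.g. `gmet` or `gmetConf`) and the chosen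
  unit normal `unitNormal g S p` -/
  meanCurvature : ((H2 × ℝ) → (ℂ × ℝ) → (ℂ × ℝ) → ℝ) → Surface → (H2 × ℝ) → ℝ
  /-- the chosen unit normal of `S` at `p ∈ S` with respect to the ambient metric `g` -/
  unitNormal : ((H2 × ℝ) → (ℂ × ℝ) → (ℂ × ℝ) → ℝ) → Surface → (H2 × ℝ) → ℂ × ℝ
  /-- the interior unit conormal of `∂S` at `p ∈ ∂S` (w.r.t. the product metric) -/
  conormal : Surface → (H2 × ℝ) → ℂ × ℝ
  /-- `LocallyOnOneSide S₁ S₂ p`: the surface `S₁` lies, locally around `p`, on one side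
  of the surface `S₂` -/
  LocallyOnOneSide : Surface → Surface → (H2 × ℝ) → Prop
  /-- the surface is strictly convex (positive definite second fundamental form) -/
  IsStrictlyConvex : Surface → Prop
  /-- the surface is tangent to the given subset of `ℍ² × ℝ` -/
  IsTangentToSet : Surface → Set (H2 × ℝ) → Prop
  /-- the surface is tangent to the first subset of `ℍ² × ℝ` along the second one -/
  IsTangentToSetAlong : Surface → Set (H2 × ℝ) → Set (H2 × ℝ) → Prop

/-- `S` is a translator of the mean curvature flow in `ℍ² × ℝ`: its mean curvature `H` and
unit normal `N` (with respect to the product metric `gmet`) satisfy `H = ⟨N, ∂ₕ⟩` at every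
point, where `∂ₕ = (0, 1)` is the unit vertical vector field. -/
def IsTranslator (G : GeomBackground) (S : G.Surface) : Prop :=
  ∀ p ∈ G.carrier S,
    G.meanCurvature gmet S p = gmet p (G.unitNormal gmet S p) ((0 : ℂ), (1 : ℝ))

/-- `S` is minimal with respect to the ambient Riemannian metric `g` on `ℍ² × ℝ`:
its mean curvature relative to `g` vanishes identically. -/
def IsMinimalIn (G : GeomBackground) (g : (H2 × ℝ) → (ℂ × ℝ) → (ℂ × ℝ) → ℝ)
    (S : G.Surface) : Prop :=
  ∀ p ∈ G.carrier S, G.meanCurvature g S p = 0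

/-- `q₁`, `q₂` are the two points of `∂∞ℍ²` at Euclidean distance `ε` from `p ∈ ∂∞ℍ²`. -/
def IsIdealPair (p : ℂ) (ε : ℝ) (q₁ q₂ : ℂ) : Prop :=
  ‖p‖ = 1 ∧ ‖q₁‖ = 1 ∧ ‖q₂‖ = 1 ∧ q₁ ≠ q₂ ∧ ‖q₁ - p‖ = ε ∧ ‖q₂ - p‖ = ε

/-- `S = 𝒮(p, ε)`: the vertical geodesic plane `c × ℝ`, where `c` is the complete geodesic
whose ideal endpoints are the two points of `∂∞ℍ²` at Euclidean distance `ε` from `p`. -/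
def IsSPlane (p : ℂ) (ε : ℝ) (S : Set (H2 × ℝ)) : Prop :=
  ∃ (q₁ q₂ : ℂ) (c : Set H2), IsIdealPair p ε q₁ q₂ ∧ IsGeodesicWithEnds c q₁ q₂ ∧
    S = c ×ˢ (Set.univ : Set ℝ)

/-- `W = 𝒮̃(p, ε)`: the connected component of `(ℍ² × ℝ) \ 𝒮(p, ε)` containing `p` in its
boundary at infinity. -/
def IsStilde (p : ℂ) (ε : ℝ) (W : Set (H2 × ℝ)) : Prop :=
  ∃ S : Set (H2 × ℝ), IsSPlane p ε S ∧
    IsConnCompOf W ((Set.univ : Set (H2 × ℝ)) \ S) ∧ ∃ q ∈ asympBdry W, q.1 = p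

/-- Vertical extension of a transformation of `ℍ²` to `ℍ² × ℝ`, fixing the `ℝ`-factor. -/
def vertExt (φ : H2 → H2) : H2 × ℝ → H2 × ℝ := fun p => (φ p.1, p.2)

/-- An isometry of `ℍ²` fixing the point `x₀` (an elliptic isometry). -/
def IsIsometryFixing (φ : H2 → H2) (x₀ : H2) : Prop :=
  Function.Bijective φ ∧ (∀ z w, hdist (φ z) (φ w) = hdist z w) ∧ φ x₀ = x₀

/-- A hyperbolic translation along the complete geodesic `E₀`: an isometry of `ℍ²`
preserving `E₀` and each of the two sides of `E₀`. -/
def IsHypTranslationAlong (φ : H2 → H2) (E₀ : Set H2) : Prop :=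
  Function.Bijective φ ∧ (∀ z w, hdist (φ z) (φ w) = hdist z w) ∧ φ '' E₀ = E₀ ∧
    ∀ D : Set H2, IsConnCompOf D ((Set.univ : Set H2) \ E₀) → φ '' D = D

/-- Signed distance to the geodesic `E₀`, positive on the side `D`. For `r ∈ ℝ`, the level
set `{hSignedDist E₀ D = r}` is the curve `ℰ_r` equidistant from `E₀` at distance `|r|`. -/
def hSignedDist (E₀ D : Set H2) (z : H2) : ℝ :=
  haveI := Classical.dec (z ∈ D)
  if z ∈ D then hdistToSet z E₀ else -(hdistToSet z E₀)

/-- `σ` is a complete geodesic intersecting `L` orthogonally at `y` (metric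
characterization: `y` is the foot of the perpendicular from every point of `σ` to `L`). -/
def PerpGeodesicAt (σ L : Set H2) (y : H2) : Prop :=
  IsCompleteGeodesic σ ∧ y ∈ σ ∧ y ∈ L ∧ ∀ z ∈ σ, hdistToSet z L = hdist z y

/-- A (closed) horoball of `ℍ²` with point at infinity `r`: in the disc model, a Euclidean
disc internally tangent to the unit circle at `r`. -/
def IsHoroball (B : Set H2) (r : ℂ) : Prop :=
  ‖r‖ = 1 ∧ ∃ ρ : ℝ, 0 < ρ ∧ ρ < 1 ∧ B = {z : H2 | ‖(z : ℂ) - ((1 - ρ : ℝ) : ℂ) * r‖ ≤ ρ}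

/-- `E` is a curve equidistant from the geodesic `Γ`: the set of points at constant
hyperbolic distance `r ≥ 0` from `Γ`, lying on one fixed side `D` of `Γ`. -/
def IsEquidistantFrom (E Γ : Set H2) : Prop :=
  ∃ (r : ℝ) (D : Set H2), 0 ≤ r ∧ IsConnCompOf D ((Set.univ : Set H2) \ Γ) ∧
    E = {z : H2 | hdistToSet z Γ = r ∧ (z ∈ D ∨ z ∈ Γ)}


namespace OSAux
open Complex


lemma cosh_arcosh {x : ℝ} (hx : 1 ≤ x) : Real.cosh (arcosh x) = x := by
  have h0 : 0 ≤ x ^ 2 - 1 := by nlinarith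
  have hs : Real.sqrt (x ^ 2 - 1) ^ 2 = x ^ 2 - 1 := Real.sq_sqrt h0
  have hy : 0 < x + Real.sqrt (x ^ 2 - 1) := by
    have := Real.sqrt_nonneg (x ^ 2 - 1); linarith
  have hinv : (x + Real.sqrt (x ^ 2 - 1))⁻¹ = x - Real.sqrt (x ^ 2 - 1) := by
    have hmul : (x + Real.sqrt (x ^ 2 - 1)) * (x - Real.sqrt (x ^ 2 - 1)) = 1 := by nlinarith
    exact inv_eq_of_mul_eq_one_right hmul
  rw [arcosh, Real.cosh_eq, Real.exp_log hy, Real.exp_neg, Real.exp_log hy, hinv]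
  ring

/-- The "cosh of distance" function, on `ℂ`. -/
def Dfun (z w : ℂ) : ℝ := 1 + 2 * normSq (z - w) / ((1 - normSq z) * (1 - normSq w))

lemma hdist_eq_arcosh (z w : H2) : hdist z w = arcosh (Dfun z w) := by
  rw [hdist, Dfun]
  congr 2
  rw [← Complex.sq_norm, ← Complex.sq_norm, ← Complex.sq_norm]

lemma normSq_lt_one {z : ℂ} (h : ‖z‖ < 1) : normSq z < 1 := by
  have h2 : ‖z‖ < 1 := h
  rw [← Complex.sq_norm]; nlinarith [norm_nonneg z]

lemma norm_lt_one_of_normSq {z : ℂ} (h : normSq z < 1) : ‖z‖ < 1 := by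
  have h2 : ‖z‖ ^ 2 < 1 := by rwa [Complex.sq_norm]
  nlinarith [norm_nonneg z]

lemma norm_eq_one_of_normSq {z : ℂ} (h : normSq z = 1) : ‖z‖ = 1 := by
  have h2 : ‖z‖ ^ 2 = 1 := by rwa [Complex.sq_norm]
  nlinarith [norm_nonneg z]

lemma normSq_eq_one {z : ℂ} (h : ‖z‖ = 1) : normSq z = 1 := by
  rw [← Complex.sq_norm, h]; norm_num

lemma one_le_Dfun {z w : ℂ} (hz : ‖z‖ < 1) (hw : ‖w‖ < 1) : 1 ≤ Dfun z w := by
  have h1 : normSq z < 1 := normSq_lt_one hz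
  have h2 : normSq w < 1 := normSq_lt_one hw
  have h3 : 0 ≤ normSq (z - w) := normSq_nonneg _
  have h4 : 0 < (1 - normSq z) * (1 - normSq w) := by nlinarith
  have : 0 ≤ 2 * normSq (z - w) / ((1 - normSq z) * (1 - normSq w)) :=
    div_nonneg (by linarith) h4.le
  simp only [Dfun]; linarith

lemma cosh_hdist (z w : H2) : Real.cosh (hdist z w) = Dfun (z : ℂ) (w : ℂ) := by
  rw [hdist_eq_arcosh]; exact cosh_arcosh (one_le_Dfun z.2 w.2)

/-! Möbius maps of the disc -/

def mphi (a z : ℂ) : ℂ := (z - a) / (1 - (starRingEnd ℂ) a * z)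
def mpsi (a w : ℂ) : ℂ := (w + a) / (1 + (starRingEnd ℂ) a * w)

lemma phi_den_ne {a z : ℂ} (ha : ‖a‖ < 1) (hz : ‖z‖ ≤ 1) : 1 - (starRingEnd ℂ) a * z ≠ 0 := by
  intro h
  have h1 : (starRingEnd ℂ) a * z = 1 := by linear_combination -h
  have h2 : ‖(starRingEnd ℂ) a * z‖ < 1 := by
    rw [norm_mul, RCLike.norm_conj]
    rcases eq_or_ne z 0 with rfl | hz0
    · simpa using ha
    · calc ‖a‖ * ‖z‖ < 1 * ‖z‖ := mul_lt_mul_of_pos_right ha (norm_pos_iff.2 hz0)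
        _ ≤ 1 := by simpa using hz
  rw [h1] at h2; simp at h2

lemma psi_den_ne {a w : ℂ} (ha : ‖a‖ < 1) (hw : ‖w‖ ≤ 1) : 1 + (starRingEnd ℂ) a * w ≠ 0 := by
  intro h
  have h1 : (starRingEnd ℂ) a * w = -1 := by linear_combination h
  have h2 : ‖(starRingEnd ℂ) a * w‖ < 1 := by
    rw [norm_mul, RCLike.norm_conj]
    rcases eq_or_ne w 0 with rfl | hw0
    · simpa using ha
    · calc ‖a‖ * ‖w‖ < 1 * ‖w‖ := mul_lt_mul_of_pos_right ha (norm_pos_iff.2 hw0)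
        _ ≤ 1 := by simpa using hw
  rw [h1] at h2; simp at h2

lemma normSq_key (a z : ℂ) :
    normSq (1 - (starRingEnd ℂ) a * z) - normSq (z - a) = (1 - normSq a) * (1 - normSq z) := by
  simp only [normSq_apply, mul_re, mul_im, sub_re, sub_im, one_re, one_im, conj_re, conj_im]
  ring

lemma one_sub_normSq_phi {a z : ℂ} (ha : ‖a‖ < 1) (hz : ‖z‖ ≤ 1) :
    1 - normSq (mphi a z) = (1 - normSq a) * (1 - normSq z) / normSq (1 - (starRingEnd ℂ) a * z) := by
  have hd := phi_den_ne ha hz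
  have hd' : normSq (1 - (starRingEnd ℂ) a * z) ≠ 0 := by
    simpa [Complex.normSq_eq_zero] using hd
  rw [mphi, normSq_div, eq_div_iff hd', sub_mul, div_mul_cancel₀ _ hd', ← normSq_key a z]
  ring

lemma one_sub_normSq_psi {a w : ℂ} (ha : ‖a‖ < 1) (hw : ‖w‖ ≤ 1) :
    1 - normSq (mpsi a w) = (1 - normSq a) * (1 - normSq w) / normSq (1 + (starRingEnd ℂ) a * w) := by
  have hd := psi_den_ne ha hw
  have hd' : normSq (1 + (starRingEnd ℂ) a * w) ≠ 0 := by
    simpa [Complex.normSq_eq_zero] using hd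
  have key : normSq (1 + (starRingEnd ℂ) a * w) - normSq (w + a)
      = (1 - normSq a) * (1 - normSq w) := by
    simp only [normSq_apply, mul_re, mul_im, add_re, add_im, one_re, one_im, conj_re, conj_im]
    ring
  rw [mpsi, normSq_div, eq_div_iff hd', sub_mul, div_mul_cancel₀ _ hd', ← key]
  ring

lemma norm_phi_lt {a z : ℂ} (ha : ‖a‖ < 1) (hz : ‖z‖ < 1) : ‖mphi a z‖ < 1 := by
  apply norm_lt_one_of_normSq
  have h := one_sub_normSq_phi ha hz.le
  have hna : normSq a < 1 := normSq_lt_one ha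
  have hnz : normSq z < 1 := normSq_lt_one hz
  have hd : 0 < normSq (1 - (starRingEnd ℂ) a * z) := normSq_pos.2 (phi_den_ne ha hz.le)
  have hpos : 0 < (1 - normSq a) * (1 - normSq z) / normSq (1 - (starRingEnd ℂ) a * z) := by
    apply div_pos (by nlinarith) hd
  linarith

lemma norm_psi_lt {a w : ℂ} (ha : ‖a‖ < 1) (hw : ‖w‖ < 1) : ‖mpsi a w‖ < 1 := by
  apply norm_lt_one_of_normSq
  have h := one_sub_normSq_psi ha hw.le
  have hna : normSq a < 1 := normSq_lt_one ha
  have hnw : normSq w < 1 := normSq_lt_one hw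
  have hd : 0 < normSq (1 + (starRingEnd ℂ) a * w) := normSq_pos.2 (psi_den_ne ha hw.le)
  have hpos : 0 < (1 - normSq a) * (1 - normSq w) / normSq (1 + (starRingEnd ℂ) a * w) := by
    apply div_pos (by nlinarith) hd
  linarith

lemma norm_psi_eq_one {a w : ℂ} (ha : ‖a‖ < 1) (hw : ‖w‖ = 1) : ‖mpsi a w‖ = 1 := by
  apply norm_eq_one_of_normSq
  have h := one_sub_normSq_psi ha hw.le
  rw [normSq_eq_one hw] at h
  simp at h
  linarith

lemma norm_phi_eq_one {a z : ℂ} (ha : ‖a‖ < 1) (hz : ‖z‖ = 1) : ‖mphi a z‖ = 1 := by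
  apply norm_eq_one_of_normSq
  have h := one_sub_normSq_phi ha hz.le
  rw [normSq_eq_one hz] at h
  simp at h
  linarith

lemma psi_phi {a z : ℂ} (ha : ‖a‖ < 1) (hz : ‖z‖ ≤ 1) : mpsi a (mphi a z) = z := by
  have hd := phi_den_ne ha hz
  have haa : (1 : ℂ) - (starRingEnd ℂ) a * a ≠ 0 := phi_den_ne ha ha.le
  rw [mpsi, mphi]
  rw [div_add' _ _ _ hd, ← mul_div_assoc, add_div' _ _ _ hd, div_div_div_cancel_right₀ hd]
  rw [div_eq_iff (by intro h; apply haa; linear_combination h)]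
  ring

lemma phi_psi {a w : ℂ} (ha : ‖a‖ < 1) (hw : ‖w‖ ≤ 1) : mphi a (mpsi a w) = w := by
  have hd := psi_den_ne ha hw
  have haa : (1 : ℂ) + (starRingEnd ℂ) a * (-a) ≠ 0 := by
    intro h; exact phi_den_ne ha ha.le (by linear_combination h)
  rw [mphi, mpsi]
  rw [div_sub' hd, ← mul_div_assoc, sub_div' hd, div_div_div_cancel_right₀ hd]
  rw [div_eq_iff (by intro h; apply haa; linear_combination h)]
  ring




/-! hyperbolic function identities -/

lemma cosh_two_mul_sub_one (t : ℝ) : Real.cosh (2*t) - 1 = 2 * Real.sinh t ^ 2 := by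
  rw [Real.cosh_two_mul, Real.cosh_sq]; ring

lemma cosh_two_mul_add_one (t : ℝ) : Real.cosh (2*t) + 1 = 2 * Real.cosh t ^ 2 := by
  rw [Real.cosh_two_mul, Real.cosh_sq]; ring

lemma one_sub_tanh_sq (x : ℝ) : 1 - Real.tanh x ^ 2 = 1 / Real.cosh x ^ 2 := by
  have h := (Real.cosh_pos x).ne'
  rw [Real.tanh_eq_sinh_div_cosh]
  field_simp
  exact Real.cosh_sq_sub_sinh_sq x

lemma same_side_identity (u v : ℝ) :
    (Real.cosh (v - u) - 1) * ((1 - Real.tanh (u/2)^2) * (1 - Real.tanh (v/2)^2)) / 2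
      = (Real.tanh (v/2) - Real.tanh (u/2))^2 := by
  have h : v - u = 2 * (v/2 - u/2) := by ring
  rw [h, cosh_two_mul_sub_one, Real.sinh_sub, one_sub_tanh_sq, one_sub_tanh_sq,
    Real.tanh_eq_sinh_div_cosh, Real.tanh_eq_sinh_div_cosh]
  have h1 := (Real.cosh_pos (u/2)).ne'
  have h2 := (Real.cosh_pos (v/2)).ne'
  field_simp

lemma sinh_nonneg' {x : ℝ} (hx : 0 ≤ x) : 0 ≤ Real.sinh x := by
  rw [Real.sinh_eq]
  have := Real.exp_le_exp.2 (by linarith : -x ≤ x)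
  linarith

lemma tanh_nonneg {x : ℝ} (hx : 0 ≤ x) : 0 ≤ Real.tanh x := by
  rw [Real.tanh_eq_sinh_div_cosh]
  exact div_nonneg (sinh_nonneg' hx) (Real.cosh_pos x).le

lemma tanh_pos {x : ℝ} (hx : 0 < x) : 0 < Real.tanh x := by
  rw [Real.tanh_eq_sinh_div_cosh]
  exact div_pos (by positivity) (Real.cosh_pos x)

lemma tanh_lt_one (x : ℝ) : Real.tanh x < 1 := by
  rw [Real.tanh_eq_sinh_div_cosh, div_lt_one (Real.cosh_pos x)]
  exact Real.sinh_lt_cosh x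

lemma tanh_abs_lt_one (x : ℝ) : |Real.tanh x| < 1 := by
  rw [abs_lt]
  constructor
  · have := tanh_lt_one (-x); rw [Real.tanh_neg] at this; linarith
  · exact tanh_lt_one x

/-! extracting norms from the distance function -/

lemma normSq_from_D0 {z : ℂ} {u : ℝ} (hz : ‖z‖ < 1) (h : Dfun z 0 = Real.cosh u) :
    normSq z = Real.tanh (u/2) ^ 2 := by
  have hn1 : normSq z < 1 := normSq_lt_one hz
  have hne : (1:ℝ) - normSq z ≠ 0 := by linarith
  rw [Dfun] at h
  simp only [sub_zero, Complex.normSq_zero, mul_one] at h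
  have e1 : normSq z * (Real.cosh u + 1) = Real.cosh u - 1 := by
    field_simp at h
    nlinarith [h]
  have e2 : Real.tanh (u/2)^2 * (Real.cosh u + 1) = Real.cosh u - 1 := by
    rw [show u = 2*(u/2) by ring, cosh_two_mul_add_one, cosh_two_mul_sub_one,
      Real.tanh_eq_sinh_div_cosh]
    have h1 := (Real.cosh_pos (u/2)).ne'
    field_simp
  have hpos : 0 < Real.cosh u + 1 := by have := Real.cosh_pos u; linarith
  have := e1.trans e2.symm
  exact mul_right_cancel₀ hpos.ne' this

lemma normSq_sub_from_D {z w : ℂ} {C : ℝ} (hz : ‖z‖ < 1) (hw : ‖w‖ < 1)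
    (h : Dfun z w = C) :
    normSq (z - w) = (C - 1) * ((1 - normSq z) * (1 - normSq w)) / 2 := by
  have h1 : normSq z < 1 := normSq_lt_one hz
  have h2 : normSq w < 1 := normSq_lt_one hw
  have hp1 : (0:ℝ) < 1 - normSq z := by linarith
  have hp2 : (0:ℝ) < 1 - normSq w := by linarith
  have hd : (1 - normSq z) * (1 - normSq w) ≠ 0 := (mul_pos hp1 hp2).ne'
  have h' : (Dfun z w - 1) * ((1 - normSq z) * (1 - normSq w)) = 2 * normSq (z - w) := by
    rw [Dfun]; field_simp
    ring
  rw [h] at h'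
  linarith

lemma norm_of_normSq_sq {z : ℂ} {t : ℝ} (ht : 0 ≤ t) (h : normSq z = t ^ 2) : ‖z‖ = t := by
  rw [Complex.norm_def, h, Real.sqrt_sq ht]

/-! equality cases -/

lemma re_mul_conj_eq {x y : ℂ} (h : normSq (x - y) = (‖x‖ - ‖y‖)^2) :
    (x * (starRingEnd ℂ) y).re = ‖x‖ * ‖y‖ := by
  have e1 : normSq (x - y) = normSq x - 2*(x * (starRingEnd ℂ) y).re + normSq y := by
    simp only [normSq_apply, mul_re, mul_im, sub_re, sub_im, conj_re, conj_im]
    ring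
  have e2 : normSq x = ‖x‖^2 := by rw [Complex.sq_norm]
  have e3 : normSq y = ‖y‖^2 := by rw [Complex.sq_norm]
  nlinarith [h, e1, e2, e3]

lemma re_mul_conj_eq_neg {x y : ℂ} (h : normSq (x - y) = (‖x‖ + ‖y‖)^2) :
    (x * (starRingEnd ℂ) y).re = -(‖x‖ * ‖y‖) := by
  have e1 : normSq (x - y) = normSq x - 2*(x * (starRingEnd ℂ) y).re + normSq y := by
    simp only [normSq_apply, mul_re, mul_im, sub_re, sub_im, conj_re, conj_im]
    ring
  have e2 : normSq x = ‖x‖^2 := by rw [Complex.sq_norm]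
  have e3 : normSq y = ‖y‖^2 := by rw [Complex.sq_norm]
  nlinarith [h, e1, e2, e3]

lemma smul_expand (c d : ℝ) (x y : ℂ) :
    normSq ((c:ℂ) * y - (d:ℂ) * x) =
      c^2 * normSq y - 2*c*d*(x * (starRingEnd ℂ) y).re + d^2 * normSq x := by
  simp only [normSq_apply, mul_re, mul_im, sub_re, sub_im, conj_re, conj_im,
    Complex.ofReal_re, Complex.ofReal_im]
  ring

lemma ray_eq {x y : ℂ} (h : normSq (x - y) = (‖x‖ - ‖y‖)^2) :
    (‖x‖ : ℂ) * y = (‖y‖ : ℂ) * x := by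
  have hre := re_mul_conj_eq h
  have e2 : normSq x = ‖x‖^2 := by rw [Complex.sq_norm]
  have e3 : normSq y = ‖y‖^2 := by rw [Complex.sq_norm]
  have h0 : normSq ((‖x‖:ℂ) * y - (‖y‖:ℂ) * x) = 0 := by
    rw [smul_expand, hre, e2, e3]; ring
  have := Complex.normSq_eq_zero.mp h0
  linear_combination this

lemma ray_eq_neg {x y : ℂ} (h : normSq (x - y) = (‖x‖ + ‖y‖)^2) :
    (‖x‖ : ℂ) * y = -((‖y‖ : ℂ) * x) := by
  have hre := re_mul_conj_eq_neg h
  have e2 : normSq x = ‖x‖^2 := by rw [Complex.sq_norm]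
  have e3 : normSq y = ‖y‖^2 := by rw [Complex.sq_norm]
  have h0 : normSq ((‖x‖:ℂ) * y + (‖y‖:ℂ) * x) = 0 := by
    have e := smul_expand ‖x‖ (-‖y‖) x y
    push_cast at e
    rw [show (‖x‖:ℂ) * y - (-‖y‖:ℂ) * x = (‖x‖:ℂ) * y + (‖y‖:ℂ) * x by ring] at e
    rw [e, hre, e2, e3]; ring
  have := Complex.normSq_eq_zero.mp h0
  linear_combination this

/-! the rigidity of unit-speed lines -/

lemma pair_rel {z w : ℂ} {u v : ℝ} (hz : ‖z‖ < 1) (hw : ‖w‖ < 1) (hv : 0 ≤ v) (huv : u ≤ v)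
    (hnz : normSq z = Real.tanh (u/2)^2) (hnw : normSq w = Real.tanh (v/2)^2)
    (hD : Dfun z w = Real.cosh (v - u)) :
    (Real.tanh (v/2) : ℂ) * z = (Real.tanh (u/2) : ℂ) * w := by
  have hsub : normSq (z - w) = (Real.tanh (v/2) - Real.tanh (u/2))^2 := by
    rw [normSq_sub_from_D hz hw hD, hnz, hnw, same_side_identity]
  have hw' : ‖w‖ = Real.tanh (v/2) := norm_of_normSq_sq (tanh_nonneg (by linarith)) hnw
  rcases le_or_gt 0 u with hu | hu
  · have hz' : ‖z‖ = Real.tanh (u/2) := norm_of_normSq_sq (tanh_nonneg (by linarith)) hnz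
    have h2 : normSq (w - z) = (‖w‖ - ‖z‖)^2 := by
      rw [show w - z = -(z-w) by ring, normSq_neg, hsub, hz', hw']
    have := ray_eq h2
    rw [hw', hz'] at this
    exact this
  · -- u < 0 : anti-ray case
    have hz' : ‖z‖ = -Real.tanh (u/2) := by
      apply norm_of_normSq_sq (by rw [← Real.tanh_neg]; exact tanh_nonneg (by linarith))
      rw [hnz]; ring
    have h2 : normSq (w - z) = (‖w‖ + ‖z‖)^2 := by
      rw [hw', hz', show w - z = -(z-w) by ring, normSq_neg, hsub]; ring
    have := ray_eq_neg h2
    rw [hw', hz'] at this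
    push_cast at this ⊢
    linear_combination this




lemma phi_sub {a z w : ℂ} (ha : ‖a‖ < 1) (hz : ‖z‖ ≤ 1) (hw : ‖w‖ ≤ 1) :
    mphi a z - mphi a w = ((1 - (normSq a : ℂ)) * (z - w)) /
      ((1 - (starRingEnd ℂ) a * z) * (1 - (starRingEnd ℂ) a * w)) := by
  have h1 := phi_den_ne ha hz
  have h2 := phi_den_ne ha hw
  rw [mphi, mphi, div_sub_div _ _ h1 h2]
  congr 1
  rw [← Complex.mul_conj]
  ring

lemma D_phi {a z w : ℂ} (ha : ‖a‖ < 1) (hz : ‖z‖ < 1) (hw : ‖w‖ < 1) :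
    Dfun (mphi a z) (mphi a w) = Dfun z w := by
  have hdz := phi_den_ne ha hz.le
  have hdw := phi_den_ne ha hw.le
  have hnz := one_sub_normSq_phi ha hz.le
  have hnw := one_sub_normSq_phi ha hw.le
  have hna : normSq a < 1 := normSq_lt_one ha
  have h1 : (0:ℝ) < 1 - normSq z := by have := normSq_lt_one hz; linarith
  have h2 : (0:ℝ) < 1 - normSq w := by have := normSq_lt_one hw; linarith
  have h3 : (0:ℝ) < 1 - normSq a := by linarith
  have hA : (0:ℝ) < normSq (1 - (starRingEnd ℂ) a * z) := normSq_pos.2 hdz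
  have hB : (0:ℝ) < normSq (1 - (starRingEnd ℂ) a * w) := normSq_pos.2 hdw
  have hcoe : (1 : ℂ) - (normSq a : ℂ) = ((1 - normSq a : ℝ) : ℂ) := by push_cast; ring
  rw [Dfun, Dfun, phi_sub ha hz.le hw.le, normSq_div, normSq_mul, hnz, hnw, normSq_mul,
    hcoe, Complex.normSq_ofReal]
  have hA' : normSq (1 - z * (starRingEnd ℂ) a) ≠ 0 := by rw [mul_comm]; exact hA.ne'
  have hB' : normSq (1 - w * (starRingEnd ℂ) a) ≠ 0 := by rw [mul_comm]; exact hB.ne'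
  field_simp

/-! tanh surjectivity and limits -/

lemma tanh_eq_exp (x : ℝ) : Real.tanh x = (Real.exp (2*x) - 1)/(Real.exp (2*x) + 1) := by
  have h := (Real.exp_pos x).ne'
  have h3 : Real.exp (2*x) = Real.exp x * Real.exp x := by
    rw [← Real.exp_add]; ring_nf
  have h4 : (0:ℝ) < Real.exp (2*x) + 1 := by positivity
  rw [Real.tanh_eq_sinh_div_cosh, Real.sinh_eq, Real.cosh_eq, Real.exp_neg, h3]
  rw [div_eq_div_iff (by positivity) (by positivity)]
  field_simp
  try ring

lemma tanh_surj {y : ℝ} (h1 : -1 < y) (h2 : y < 1) :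
    Real.tanh (Real.log ((1+y)/(1-y)) / 2) = y := by
  have hpos : 0 < (1+y)/(1-y) := div_pos (by linarith) (by linarith)
  rw [tanh_eq_exp, show 2 * (Real.log ((1+y)/(1-y))/2) = Real.log ((1+y)/(1-y)) by ring,
    Real.exp_log hpos]
  have hne : (1:ℝ) - y ≠ 0 := ne_of_gt (by linarith)
  have e1 : (1+y)/(1-y) - 1 = (2*y)/(1-y) := by
    rw [div_sub_one hne]; congr 1; ring
  have e2 : (1+y)/(1-y) + 1 = 2/(1-y) := by
    rw [div_add_one hne]; congr 1; ring
  rw [e1, e2, div_div_div_cancel_right₀ hne]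
  ring

lemma tendsto_tanh_atTop : Tendsto Real.tanh atTop (𝓝 1) := by
  have key : ∀ x : ℝ, Real.tanh x = 1 - 2/(Real.exp (2*x)+1) := by
    intro x
    have h4 : (0:ℝ) < Real.exp (2*x) + 1 := by positivity
    rw [tanh_eq_exp]
    field_simp
    ring
  have h5 : Tendsto (fun x : ℝ => Real.exp (2*x) + 1) atTop atTop := by
    apply Filter.tendsto_atTop_add_const_right
    exact Real.tendsto_exp_atTop.comp (Filter.Tendsto.const_mul_atTop two_pos tendsto_id)
  have h6 : Tendsto (fun x : ℝ => 2/(Real.exp (2*x)+1)) atTop (𝓝 0) :=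
    Filter.Tendsto.div_atTop tendsto_const_nhds h5
  have h7 : Tendsto (fun x : ℝ => 1 - 2/(Real.exp (2*x)+1)) atTop (𝓝 (1 - 0)) :=
    Filter.Tendsto.const_sub 1 h6
  simp only [sub_zero] at h7
  exact h7.congr (fun x => (key x).symm)

lemma tendsto_tanh_atBot : Tendsto Real.tanh atBot (𝓝 (-1)) := by
  have : Tendsto (fun x : ℝ => -Real.tanh (-x)) atBot (𝓝 (-1)) := by
    apply Filter.Tendsto.neg
    exact tendsto_tanh_atTop.comp tendsto_neg_atBot_atTop
  refine this.congr (fun x => ?_)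
  rw [Real.tanh_neg, neg_neg]




/-- Rigidity: a unit-speed line through the origin is a diameter with the
explicit `tanh` parametrisation. -/
lemma cosh_swap (a b : ℝ) : Real.cosh (a - b) = Real.cosh (b - a) := by
  rw [show a - b = -(b - a) by ring, Real.cosh_neg]

lemma line_structure {η : ℝ → ℂ} (hn : ∀ u, ‖η u‖ < 1) (h0 : η 0 = 0)
    (hD : ∀ u v, Dfun (η u) (η v) = Real.cosh (u - v)) :
    ∃ ω : ℂ, ‖ω‖ = 1 ∧ ∀ u, η u = (Real.tanh (u/2) : ℂ) * ω := by
  have hns : ∀ u, normSq (η u) = Real.tanh (u/2)^2 := by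
    intro u
    apply normSq_from_D0 (hn u)
    have := hD u 0
    rwa [sub_zero, h0] at this
  set t1 := Real.tanh ((1:ℝ)/2) with ht1def
  have ht1 : 0 < t1 := tanh_pos (by norm_num)
  have hco : (t1 : ℂ) ≠ 0 := by
    simpa using ht1.ne'
  refine ⟨(t1 : ℂ)⁻¹ * η 1, ?_, ?_⟩
  · have hη1 : ‖η 1‖ = t1 := norm_of_normSq_sq ht1.le (hns 1)
    rw [norm_mul, norm_inv, hη1, Complex.norm_real, Real.norm_eq_abs, abs_of_pos ht1]
    exact inv_mul_cancel₀ ht1.ne'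
  · intro u
    apply mul_left_cancel₀ hco
    rw [show (t1:ℂ) * ((Real.tanh (u/2):ℂ) * ((t1:ℂ)⁻¹ * η 1))
        = (Real.tanh (u/2):ℂ) * η 1 * ((t1:ℂ) * (t1:ℂ)⁻¹) by ring,
      mul_inv_cancel₀ hco, mul_one]
    rcases le_or_gt u 1 with hu | hu
    · exact pair_rel (hn u) (hn 1) zero_le_one hu (hns u) (hns 1)
        ((hD u 1).trans (cosh_swap u 1))
    · exact (pair_rel (hn 1) (hn u) (by linarith) hu.le (hns 1) (hns u)
        ((hD 1 u).trans (cosh_swap 1 u))).symm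




lemma keyineq_sq {u m x : ℝ} (hu : |u| ≤ 1) (hm1 : m ≤ 1) (hm2 : u^2 ≤ m)
    (hx1 : -1 ≤ x) (hx2 : x ≤ 1) :
    (x-1)^2*(1+2*u+m) ≤ 4*(1-2*u*x+x^2*m) := by
  have hu1 : u ≤ 1 := le_of_abs_le hu
  have hu2 : -1 ≤ u := neg_le_of_abs_le hu
  have hux : 0 ≤ 1 - u*x := by nlinarith [abs_nonneg u]
  rcases le_or_gt 0 ((1-x)^2 - 4*x^2) with hc | hc
  · have e1 : (x-1)^2*(1+2*u+m) - 4*(1-2*u*x+x^2*m)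
        = ((1-x)^2-4*x^2)*(m-1) + 2*(1+x)^2*(u-1) := by ring
    nlinarith [mul_nonneg hc (by linarith : (0:ℝ) ≤ 1 - m),
      mul_nonneg (sq_nonneg (1+x)) (by linarith : (0:ℝ) ≤ 1 - u)]
  · have e2 : (x-1)^2*(1+2*u+m) - 4*(1-2*u*x+x^2*m)
        = ((1-x)^2-4*x^2)*(m - u^2) - (1-u)*(1+x)*((1+u)*(1-x)+2*(1-u*x)) := by ring
    have h3 : 0 ≤ (1-u)*(1+x)*((1+u)*(1-x)+2*(1-u*x)) := by
      apply mul_nonneg (mul_nonneg (by linarith) (by linarith))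
      have := mul_nonneg (by linarith : (0:ℝ) ≤ 1+u) (by linarith : (0:ℝ) ≤ 1-x)
      linarith
    nlinarith [mul_nonneg (by linarith : (0:ℝ) ≤ 4*x^2 - (1-x)^2) (by linarith : (0:ℝ) ≤ m - u^2)]

lemma keyineq {B : ℂ} (hB : ‖B‖ ≤ 1) {x : ℝ} (hx1 : -1 ≤ x) (hx2 : x ≤ 1) :
    |x - 1| * ‖1 + B‖ ≤ 2 * ‖(1:ℂ) - B * (x:ℂ)‖ := by
  have hm1 : normSq B ≤ 1 := by
    have : normSq B = ‖B‖^2 := by rw [Complex.sq_norm]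
    nlinarith [norm_nonneg B]
  have hu : |B.re| ≤ 1 := le_trans (Complex.abs_re_le_norm B) hB
  have hsq : (|x-1| * ‖1+B‖)^2 ≤ (2 * ‖(1:ℂ) - B * (x:ℂ)‖)^2 := by
    have e1 : (|x-1| * ‖1+B‖)^2 = (x-1)^2 * normSq (1+B) := by
      rw [mul_pow, _root_.sq_abs, Complex.sq_norm]
    have e2 : (2 * ‖(1:ℂ) - B * (x:ℂ)‖)^2 = 4 * normSq (1 - B * (x:ℂ)) := by
      rw [mul_pow, Complex.sq_norm]; ring
    rw [e1, e2]
    have e3 : normSq (1+B) = 1 + 2*B.re + (B.re^2 + B.im^2) := by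
      simp [normSq_apply, add_re, add_im]; ring
    have e4 : normSq (1 - B * (x:ℂ)) = 1 - 2*B.re*x + x^2*(B.re^2+B.im^2) := by
      simp [normSq_apply, sub_re, sub_im, mul_re, mul_im, Complex.ofReal_re, Complex.ofReal_im]
      ring
    have e5 : B.re^2 + B.im^2 = normSq B := by simp [normSq_apply]; ring
    rw [e3, e4, e5]
    exact keyineq_sq hu hm1 (by nlinarith [sq_nonneg B.im, e5]) hx1 hx2
  have h1 : 0 ≤ |x-1| * ‖1+B‖ := by positivity
  have h2 : 0 ≤ 2 * ‖(1:ℂ) - B * (x:ℂ)‖ := by positivity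
  nlinarith [hsq, h1, h2]

lemma psi_sub {a w w' : ℂ} (ha : ‖a‖ < 1) (hw : ‖w‖ ≤ 1) (hw' : ‖w'‖ ≤ 1) :
    mpsi a w - mpsi a w' = ((1 - (normSq a : ℂ)) * (w - w')) /
      ((1 + (starRingEnd ℂ) a * w) * (1 + (starRingEnd ℂ) a * w')) := by
  have h1 := psi_den_ne ha hw
  have h2 := psi_den_ne ha hw'
  rw [mpsi, mpsi, div_sub_div _ _ h1 h2]
  congr 1
  rw [← Complex.mul_conj]
  ring

lemma norm_one_sub_normSq (a : ℂ) (ha : ‖a‖ < 1) : ‖(1:ℂ) - (normSq a : ℂ)‖ = 1 - normSq a := by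
  have : (1:ℂ) - (normSq a : ℂ) = ((1 - normSq a : ℝ) : ℂ) := by push_cast; ring
  rw [this, Complex.norm_real, Real.norm_eq_abs, _root_.abs_of_nonneg (by
    have := normSq_lt_one ha; linarith)]

lemma chord_bound {a ω : ℂ} (ha : ‖a‖ < 1) (hω : ‖ω‖ = 1) {x : ℝ}
    (hx1 : -1 ≤ x) (hx2 : x ≤ 1) :
    ‖mpsi a (ω * (x:ℂ)) - mpsi a ω‖ ≤ ‖mpsi a ω - mpsi a (-ω)‖ := by
  have hωx : ‖ω * (x:ℂ)‖ ≤ 1 := by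
    rw [norm_mul, hω, one_mul, Complex.norm_real, Real.norm_eq_abs]
    rw [abs_le]; exact ⟨hx1, hx2⟩
  have hω1 : ‖ω‖ ≤ 1 := hω.le
  have hωn : ‖-ω‖ ≤ 1 := by rw [norm_neg]; exact hω.le
  have d1 := psi_den_ne ha hωx
  have d2 := psi_den_ne ha hω1
  have d3 := psi_den_ne ha hωn
  rw [psi_sub ha hωx hω1, psi_sub ha hω1 hωn]
  rw [norm_div, norm_div, norm_mul, norm_mul, norm_mul, norm_mul]
  rw [norm_one_sub_normSq a ha]
  have hna : 0 < 1 - normSq a := by have := normSq_lt_one ha; linarith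
  -- reduce to keyineq with B = -(conj a * ω)
  set b := (starRingEnd ℂ) a with hb
  have hB : ‖-(b*ω)‖ ≤ 1 := by
    rw [norm_neg, norm_mul, hb, RCLike.norm_conj, hω, mul_one]; exact ha.le
  have key := keyineq hB hx1 hx2
  rw [show (1:ℂ) + -(b*ω) = 1 - b*ω by ring] at key
  rw [show (1:ℂ) - (-(b*ω)) * (x:ℂ) = 1 + b * (ω * (x:ℂ)) by ring] at key
  have e1 : ‖ω * (x:ℂ) - ω‖ = |x - 1| := by
    rw [show ω * (x:ℂ) - ω = ω * ((x:ℂ) - 1) by ring, norm_mul, hω, one_mul]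
    rw [show ((x:ℂ) - 1) = ((x - 1 : ℝ) : ℂ) by push_cast; ring, Complex.norm_real,
      Real.norm_eq_abs]
  have e2 : ‖ω - -ω‖ = 2 := by
    rw [show ω - -ω = 2 * ω by ring, norm_mul, hω, mul_one]
    simp
  have e3 : ‖(1:ℂ) + b * -ω‖ = ‖(1:ℂ) - b * ω‖ := by rw [show (1:ℂ) + b*-ω = 1 - b*ω by ring]
  rw [e1, e2, e3]
  have p1 : 0 < ‖(1:ℂ) + b * (ω * (x:ℂ))‖ := norm_pos_iff.2 d1
  have p2 : 0 < ‖(1:ℂ) + b * ω‖ := norm_pos_iff.2 d2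
  have d3' : (1:ℂ) - b * ω ≠ 0 := by
    intro h; apply d3; rw [show (1:ℂ) + b * -ω = 1 - b * ω by ring]; exact h
  have p3 : 0 < ‖(1:ℂ) - b * ω‖ := norm_pos_iff.2 d3'
  rw [div_le_div_iff₀ (by positivity) (by positivity)]
  calc (1 - normSq a) * |x-1| * (‖(1:ℂ)+b*ω‖ * ‖(1:ℂ)-b*ω‖)
      = (1-normSq a) * ‖(1:ℂ)+b*ω‖ * (|x-1| * ‖(1:ℂ)-b*ω‖) := by ring
    _ ≤ (1-normSq a) * ‖(1:ℂ)+b*ω‖ * (2*‖(1:ℂ)+b*(ω*(x:ℂ))‖) := by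
        apply mul_le_mul_of_nonneg_left key (by positivity)
    _ = (1-normSq a)*2*(‖(1:ℂ)+b*(ω*(x:ℂ))‖*‖(1:ℂ)+b*ω‖) := by ring

/-- the set of points on the unit circle at distance `ε` from `p` has at most the two
given elements -/
lemma two_point {p q₁ q₂ y : ℂ} {ε : ℝ} (hp : ‖p‖ = 1) (h1 : ‖q₁‖ = 1) (h2 : ‖q₂‖ = 1)
    (hne : q₁ ≠ q₂) (hd1 : ‖q₁ - p‖ = ε) (hd2 : ‖q₂ - p‖ = ε) (hy : ‖y‖ = 1)
    (hdy : ‖y - p‖ = ε) : y = q₁ ∨ y = q₂ := by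
  have hnp : normSq p = 1 := by rw [← Complex.sq_norm, hp]; norm_num
  have key : ∀ z : ℂ, ‖z‖ = 1 → ‖z - p‖ = ε → (z * (starRingEnd ℂ) p).re = 1 - ε^2/2 := by
    intro z hz hzd
    have hnz : normSq z = 1 := by rw [← Complex.sq_norm, hz]; norm_num
    have e : normSq (z - p) = normSq z - 2*(z*(starRingEnd ℂ) p).re + normSq p := by
      simp only [normSq_apply, mul_re, mul_im, sub_re, sub_im, conj_re, conj_im]; ring
    have e2 : normSq (z - p) = ε^2 := by
      rw [← Complex.sq_norm, hzd]
    rw [hnz, hnp, e2] at e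
    linarith
  have imsq : ∀ z : ℂ, ‖z‖ = 1 → ‖z - p‖ = ε →
      (z * (starRingEnd ℂ) p).im^2 = 1 - (1-ε^2/2)^2 := by
    intro z hz hzd
    have hns : normSq (z * (starRingEnd ℂ) p) = 1 := by
      rw [normSq_mul, normSq_conj]
      rw [show normSq z = 1 from by rw [← Complex.sq_norm, hz]; norm_num,
        hnp]; norm_num
    have := key z hz hzd
    have e : (z * (starRingEnd ℂ) p).re^2 + (z * (starRingEnd ℂ) p).im^2 = 1 := by
      rw [← hns]; simp [normSq_apply]; ring
    nlinarith [this, e]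
  have recover : ∀ z : ℂ, (z * (starRingEnd ℂ) p) * p = z := by
    intro z
    have : (starRingEnd ℂ) p * p = (normSq p : ℂ) := by
      rw [mul_comm, Complex.mul_conj]
    rw [mul_assoc, this, hnp]; simp
  have him : (y * (starRingEnd ℂ) p).im = (q₁ * (starRingEnd ℂ) p).im
      ∨ (y * (starRingEnd ℂ) p).im = (q₂ * (starRingEnd ℂ) p).im := by
    have i1 := imsq y hy hdy
    have i2 := imsq q₁ h1 hd1
    have i3 := imsq q₂ h2 hd2
    have hq12 : (q₂ * (starRingEnd ℂ) p).im = -(q₁ * (starRingEnd ℂ) p).im := by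
      have : (q₂ * (starRingEnd ℂ) p).im = (q₁ * (starRingEnd ℂ) p).im
          ∨ (q₂ * (starRingEnd ℂ) p).im = -(q₁ * (starRingEnd ℂ) p).im := by
        have := sq_eq_sq_iff_eq_or_eq_neg.mp (i3.trans i2.symm)
        tauto
      rcases this with h | h
      · exfalso
        apply hne
        have : q₁ * (starRingEnd ℂ) p = q₂ * (starRingEnd ℂ) p := by
          apply Complex.ext
          · rw [key q₁ h1 hd1, key q₂ h2 hd2]
          · rw [h]
        have := congrArg (· * p) this
        simpa [recover] using this
      · exact h
    have := sq_eq_sq_iff_eq_or_eq_neg.mp (i1.trans i2.symm)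
    rcases this with h | h
    · exact Or.inl h
    · right; rw [hq12, h]
  rcases him with h | h
  · left
    have : y * (starRingEnd ℂ) p = q₁ * (starRingEnd ℂ) p := by
      apply Complex.ext
      · rw [key y hy hdy, key q₁ h1 hd1]
      · exact h
    have := congrArg (· * p) this
    simpa [recover] using this
  · right
    have : y * (starRingEnd ℂ) p = q₂ * (starRingEnd ℂ) p := by
      apply Complex.ext
      · rw [key y hy hdy, key q₂ h2 hd2]
      · exact h
    have := congrArg (· * p) this
    simpa [recover] using this




lemma psi_inj {a w w' : ℂ} (ha : ‖a‖ < 1) (hw : ‖w‖ ≤ 1) (hw' : ‖w'‖ ≤ 1)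
    (h : mpsi a w = mpsi a w') : w = w' := by
  have := congrArg (mphi a) h
  rwa [phi_psi ha hw, phi_psi ha hw'] at this

lemma unit_to_angle {v : ℂ} (hv : ‖v‖ = 1) (him : 0 ≤ v.im) :
    ∃ θ : ℝ, 0 ≤ θ ∧ θ ≤ Real.pi ∧ Complex.exp (θ * I) = v ∧
      (0 < v.im → (0 < θ ∧ θ < Real.pi)) := by
  have hns : v.re^2 + v.im^2 = 1 := by
    have : normSq v = 1 := by rw [← Complex.sq_norm, hv]; norm_num
    rw [← this]; simp [normSq_apply]; ring
  have hre1 : -1 ≤ v.re := by nlinarith [sq_nonneg v.im]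
  have hre2 : v.re ≤ 1 := by nlinarith [sq_nonneg v.im]
  refine ⟨Real.arccos v.re, Real.arccos_nonneg _, Real.arccos_le_pi _, ?_, ?_⟩
  · apply Complex.ext
    · rw [Complex.exp_ofReal_mul_I_re, Real.cos_arccos hre1 hre2]
    · rw [Complex.exp_ofReal_mul_I_im, Real.sin_arccos]
      rw [show 1 - v.re^2 = v.im^2 by linarith, Real.sqrt_sq him]
  · intro hpos
    constructor
    · rcases (Real.arccos_nonneg v.re).lt_or_eq with h | h
      · exact h
      · exfalso
        have : Real.sin (Real.arccos v.re) = 0 := by rw [← h]; simp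
        rw [Real.sin_arccos, show 1 - v.re^2 = v.im^2 by linarith, Real.sqrt_sq him] at this
        linarith
    · rcases (Real.arccos_le_pi v.re).lt_or_eq with h | h
      · exact h
      · exfalso
        have : Real.sin (Real.arccos v.re) = 0 := by rw [h]; simp
        rw [Real.sin_arccos, show 1 - v.re^2 = v.im^2 by linarith, Real.sqrt_sq him] at this
        linarith

lemma arc_bound {a ω p vp : ℂ} {ε : ℝ} (ha : ‖a‖ < 1) (hω : ‖ω‖ = 1) (hp : ‖p‖ = 1)
    (hq1 : ‖mpsi a ω - p‖ = ε) (hq2 : ‖mpsi a (-ω) - p‖ = ε)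
    (hqne : mpsi a ω ≠ mpsi a (-ω))
    (hvp : ‖vp‖ = 1) (hvpim : 0 < vp.im) (hppsi : mpsi a (ω * vp) = p) :
    ∀ w : ℂ, ‖w‖ = 1 → 0 ≤ w.im → ‖mpsi a (ω * w) - p‖ ≤ ε := by
  intro w hw hwim
  by_contra hcon
  push_neg at hcon
  have hε : 0 ≤ ε := by rw [← hq1]; exact norm_nonneg _
  -- the circle path
  set g : ℝ → ℝ := fun θ => ‖mpsi a (ω * Complex.exp (θ * I)) - p‖ with hg
  have hcurve : ∀ θ : ℝ, ‖ω * Complex.exp ((θ:ℂ) * I)‖ = 1 := by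
    intro θ
    rw [norm_mul, hω, one_mul, Complex.norm_exp_ofReal_mul_I]
  have hgcont : Continuous g := by
    have hc1 : Continuous fun θ : ℝ => ω * Complex.exp ((θ:ℂ) * I) := by
      apply continuous_const.mul
      exact Complex.continuous_exp.comp (Complex.continuous_ofReal.mul continuous_const)
    have hc2 : Continuous fun θ : ℝ => mpsi a (ω * Complex.exp ((θ:ℂ) * I)) := by
      simp only [mpsi]
      apply Continuous.div
      · exact hc1.add continuous_const
      · exact continuous_const.add (continuous_const.mul hc1)
      · intro θ
        exact psi_den_ne ha (hcurve θ).le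
    exact (hc2.sub continuous_const).norm
  obtain ⟨θp, hθp0, hθpπ, hθpexp, hθpstrict⟩ := unit_to_angle hvp hvpim.le
  obtain ⟨θps, hθps⟩ := hθpstrict hvpim
  obtain ⟨θw, hθw0, hθwπ, hθwexp, -⟩ := unit_to_angle hw hwim
  have hgθp : g θp = 0 := by
    rw [hg]; simp only []
    rw [hθpexp, hppsi]; simp
  have hgθw : ε < g θw := by
    rw [hg]; simp only []
    rw [hθwexp]; exact hcon
  have hg0 : g 0 = ε := by
    rw [hg]; simp only []
    norm_num
    exact hq1
  have hgπ : g Real.pi = ε := by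
    rw [hg]; simp only []
    rw [show ((Real.pi:ℝ):ℂ) * I = (Real.pi:ℂ) * I from rfl, Complex.exp_pi_mul_I]
    rw [show ω * (-1) = -ω by ring]
    exact hq2
  -- find θ' strictly inside (0, π) with g θ' = ε
  have main : ∃ θ' : ℝ, 0 < θ' ∧ θ' < Real.pi ∧ g θ' = ε := by
    rcases lt_trichotomy θw θp with h | h | h
    · have hiv := intermediate_value_Icc' h.le (hgcont.continuousOn (s := Icc θw θp))
      have : ε ∈ Icc (g θp) (g θw) := ⟨by rw [hgθp]; exact hε, hgθw.le⟩
      obtain ⟨θ', hθ'mem, hθ'⟩ := hiv this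
      refine ⟨θ', ?_, ?_, hθ'⟩
      · rcases hθ'mem.1.lt_or_eq with h2 | h2
        · linarith [hθw0]
        · exfalso; rw [← h2] at hθ'; rw [hθ'] at hgθw; exact lt_irrefl _ hgθw
      · linarith [hθ'mem.2, hθps]
    · exfalso; rw [h] at hgθw; rw [hgθp] at hgθw; linarith
    · have hiv := intermediate_value_Icc h.le (hgcont.continuousOn (s := Icc θp θw))
      have : ε ∈ Icc (g θp) (g θw) := ⟨by rw [hgθp]; exact hε, hgθw.le⟩
      obtain ⟨θ', hθ'mem, hθ'⟩ := hiv this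
      refine ⟨θ', ?_, ?_, hθ'⟩
      · linarith [hθ'mem.1, θps]
      · rcases hθ'mem.2.lt_or_eq with h2 | h2
        · linarith [hθwπ]
        · exfalso; rw [h2] at hθ'; rw [hθ'] at hgθw; exact lt_irrefl _ hgθw
  obtain ⟨θ', hθ'0, hθ'π, hθ'ε⟩ := main
  -- the point mpsi a (ω * exp(θ' I)) is on the circle at distance ε from p
  have hy : ‖mpsi a (ω * Complex.exp ((θ':ℂ) * I))‖ = 1 := norm_psi_eq_one ha (hcurve θ')
  have hydist : ‖mpsi a (ω * Complex.exp ((θ':ℂ) * I)) - p‖ = ε := hθ'ε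
  have hq1n : ‖mpsi a ω‖ = 1 := norm_psi_eq_one ha hω
  have hq2n : ‖mpsi a (-ω)‖ = 1 := norm_psi_eq_one ha (by rw [norm_neg]; exact hω)
  have := two_point hp hq1n hq2n hqne hq1 hq2 hy hydist
  have hsin : Real.sin θ' > 0 := Real.sin_pos_of_pos_of_lt_pi hθ'0 hθ'π
  have hωne : ω ≠ 0 := by intro h; rw [h] at hω; simp at hω
  rcases this with h | h
  · have hh := psi_inj ha (hcurve θ').le hω.le h
    have : Complex.exp ((θ':ℂ) * I) = 1 := by
      apply mul_left_cancel₀ hωne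
      rw [mul_one]; exact hh
    have him := congrArg Complex.im this
    rw [Complex.exp_ofReal_mul_I_im] at him
    simp at him
    linarith
  · have := psi_inj ha (hcurve θ').le (by rw [norm_neg]; exact hω.le) h
    have : Complex.exp ((θ':ℂ) * I) = -1 := by
      have h2 : ω * Complex.exp ((θ':ℂ) * I) = ω * (-1) := by rw [this]; ring
      exact mul_left_cancel₀ hωne h2
    have him := congrArg Complex.im this
    rw [Complex.exp_ofReal_mul_I_im] at him
    simp at him
    linarith




lemma ray_exit {O : Set ℂ} (hO : IsOpen O) (hb : ∀ z ∈ O, ‖z‖ < 1) {z : ℂ} (hz : z ∈ O)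
    (d : ℂ) (hd : ‖d‖ = 1) : ∃ s : ℝ, 0 ≤ s ∧ z + (s:ℂ) * d ∈ frontier O := by
  set bad : Set ℝ := {s : ℝ | 0 ≤ s ∧ z + (s:ℂ) * d ∉ O} with hbad
  have hne : (3:ℝ) ∈ bad := by
    constructor
    · norm_num
    · intro hmem
      have h1 : ‖z + (3:ℂ) * d‖ < 1 := hb _ hmem
      have h2 : ‖(3:ℂ) * d‖ ≤ ‖z + (3:ℂ)*d‖ + ‖z‖ := by
        calc ‖(3:ℂ)*d‖ = ‖(z + (3:ℂ)*d) - z‖ := by ring_nf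
          _ ≤ ‖z + (3:ℂ)*d‖ + ‖z‖ := norm_sub_le _ _
      rw [norm_mul, hd, mul_one] at h2
      simp only [Complex.norm_ofNat] at h2
      have := hb z hz
      linarith
  have hbdd : BddBelow bad := ⟨0, fun s hs => hs.1⟩
  set s₀ := sInf bad with hs₀
  have hs₀0 : 0 ≤ s₀ := le_csInf ⟨3, hne⟩ (fun s hs => hs.1)
  have hbelow : ∀ s : ℝ, 0 ≤ s → s < s₀ → z + (s:ℂ) * d ∈ O := by
    intro s h0 hlt
    by_contra hcon
    exact absurd (csInf_le hbdd ⟨h0, hcon⟩) (not_le.2 hlt)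
  have hnotO : z + (s₀:ℂ) * d ∉ O := by
    intro hmem
    obtain ⟨τ, hτ, hball⟩ := Metric.isOpen_iff.1 hO _ hmem
    obtain ⟨s, hsbad, hslt⟩ := (csInf_lt_iff hbdd ⟨3, hne⟩).1 (by linarith : s₀ < s₀ + τ)
    rcases lt_or_ge s s₀ with h | h
    · exact hsbad.2 (hbelow s hsbad.1 h)
    · apply hsbad.2
      apply hball
      rw [Metric.mem_ball, dist_eq_norm]
      calc ‖z + (s:ℂ)*d - (z + (s₀:ℂ)*d)‖ = ‖((s - s₀ : ℝ):ℂ) * d‖ := by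
            congr 1; push_cast; ring
        _ = |s - s₀| := by rw [norm_mul, hd, mul_one, Complex.norm_real, Real.norm_eq_abs]
        _ < τ := by rw [_root_.abs_of_nonneg (by linarith)]; linarith
  have hclos : z + (s₀:ℂ) * d ∈ closure O := by
    rcases hs₀0.lt_or_eq with hpos | heq
    · rw [Metric.mem_closure_iff]
      intro τ hτ
      set s := s₀ - min s₀ τ / 2 with hsdef
      have h1 : 0 < min s₀ τ := lt_min hpos hτ
      have h2 : 0 ≤ s := by
        have : min s₀ τ ≤ s₀ := min_le_left _ _
        simp only [hsdef]; linarith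
      have h3 : s < s₀ := by simp only [hsdef]; linarith
      refine ⟨z + (s:ℂ)*d, hbelow s h2 h3, ?_⟩
      rw [dist_eq_norm]
      calc ‖z + (s₀:ℂ)*d - (z + (s:ℂ)*d)‖ = ‖((s₀ - s : ℝ):ℂ) * d‖ := by
            congr 1; push_cast; ring
        _ = |s₀ - s| := by rw [norm_mul, hd, mul_one, Complex.norm_real, Real.norm_eq_abs]
        _ < τ := by
            rw [_root_.abs_of_nonneg (by linarith)]
            have : min s₀ τ ≤ τ := min_le_right _ _
            simp only [hsdef]; linarith
    · exfalso
      apply hnotO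
      rw [← heq]
      simpa using hz
  exact ⟨s₀, hs₀0, hclos, by rwa [hO.interior_eq]⟩

lemma vert_bound {p : ℂ} {r : ℝ} {O : Set ℂ} (hO : IsOpen O) (hb : ∀ z ∈ O, ‖z‖ < 1)
    (hf : ∀ w ∈ frontier O, ‖w - p‖ ≤ r) : ∀ z ∈ O, ‖z - p‖ ≤ r := by
  intro z hz
  obtain ⟨s₂, hs₂0, hw₂⟩ := ray_exit hO hb hz I Complex.norm_I
  obtain ⟨s₁, hs₁0, hw₁⟩ := ray_exit hO hb hz (-I) (by rw [norm_neg]; exact Complex.norm_I)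
  set w₂ := z + (s₂:ℂ) * I with hw₂def
  set w₁ := z + (s₁:ℂ) * (-I) with hw₁def
  have hsum : 0 < s₁ + s₂ := by
    rcases hs₁0.lt_or_eq with h | h
    · linarith
    · rcases hs₂0.lt_or_eq with h2 | h2
      · linarith
      · exfalso
        have : w₂ = z := by rw [hw₂def, ← h2]; push_cast; ring
        rw [this] at hw₂
        exact hw₂.2 (by rwa [hO.interior_eq])
  have hcomb : z - p = ((s₁ / (s₁+s₂) : ℝ):ℂ) * (w₂ - p) + ((s₂/(s₁+s₂) : ℝ):ℂ) * (w₁ - p) := by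
    have hne' : ((s₁:ℂ) + (s₂:ℂ)) ≠ 0 := by
      have h9 : ((s₁+s₂:ℝ):ℂ) ≠ 0 := by
        simp only [ne_eq, Complex.ofReal_eq_zero]; linarith
      push_cast at h9; exact h9
    rw [hw₂def, hw₁def]
    push_cast
    field_simp
    ring
  calc ‖z - p‖ = ‖((s₁/(s₁+s₂):ℝ):ℂ) * (w₂ - p) + ((s₂/(s₁+s₂):ℝ):ℂ) * (w₁ - p)‖ := by
        rw [← hcomb]
    _ ≤ ‖((s₁/(s₁+s₂):ℝ):ℂ) * (w₂ - p)‖ + ‖((s₂/(s₁+s₂):ℝ):ℂ) * (w₁ - p)‖ := norm_add_le _ _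
    _ = (s₁/(s₁+s₂)) * ‖w₂ - p‖ + (s₂/(s₁+s₂)) * ‖w₁ - p‖ := by
        rw [norm_mul, norm_mul, Complex.norm_real, Complex.norm_real, Real.norm_eq_abs,
          Real.norm_eq_abs, _root_.abs_of_nonneg (by positivity),
          _root_.abs_of_nonneg (by positivity)]
    _ ≤ (s₁/(s₁+s₂)) * r + (s₂/(s₁+s₂)) * r := by
        apply add_le_add
        · exact mul_le_mul_of_nonneg_left (hf _ hw₂) (by positivity)
        · exact mul_le_mul_of_nonneg_left (hf _ hw₁) (by positivity)
    _ = r := by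
        rw [div_mul_eq_mul_div, div_mul_eq_mul_div, ← add_div,
          div_eq_iff (ne_of_gt hsum)]
        ring




lemma conj_mul_self {ω : ℂ} (hω : ‖ω‖ = 1) : (starRingEnd ℂ) ω * ω = 1 := by
  rw [mul_comm, Complex.mul_conj, normSq_eq_one hω]; simp

lemma tendsto_psi_tanh_top {a ω : ℂ} (ha : ‖a‖ < 1) (hω : ‖ω‖ = 1) :
    Tendsto (fun u : ℝ => mpsi a ((Real.tanh (u/2) : ℂ) * ω)) atTop (𝓝 (mpsi a ω)) := by
  have h1 : Tendsto (fun u : ℝ => Real.tanh (u/2)) atTop (𝓝 1) := by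
    apply tendsto_tanh_atTop.comp
    exact Tendsto.atTop_div_const two_pos tendsto_id
  have h2 : Tendsto (fun u : ℝ => ((Real.tanh (u/2) : ℝ) : ℂ) * ω) atTop (𝓝 ω) := by
    have := ((Complex.continuous_ofReal.tendsto 1).comp h1).mul_const ω
    simpa using this
  have h3 : ContinuousAt (mpsi a) ω := by
    apply ContinuousAt.div
    · exact continuousAt_id.add continuousAt_const
    · exact continuousAt_const.add (continuousAt_const.mul continuousAt_id)
    · exact psi_den_ne ha hω.le
  exact h3.tendsto.comp h2

lemma tendsto_psi_tanh_bot {a ω : ℂ} (ha : ‖a‖ < 1) (hω : ‖ω‖ = 1) :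
    Tendsto (fun u : ℝ => mpsi a ((Real.tanh (u/2) : ℂ) * ω)) atBot (𝓝 (mpsi a (-ω))) := by
  have h1 : Tendsto (fun u : ℝ => Real.tanh (u/2)) atBot (𝓝 (-1)) := by
    apply tendsto_tanh_atBot.comp
    exact Tendsto.atBot_div_const two_pos tendsto_id
  have h2 : Tendsto (fun u : ℝ => ((Real.tanh (u/2) : ℝ) : ℂ) * ω) atBot (𝓝 (-ω)) := by
    have := ((Complex.continuous_ofReal.tendsto (-1)).comp h1).mul_const ω
    simpa using this
  have h3 : ContinuousAt (mpsi a) (-ω) := by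
    apply ContinuousAt.div
    · exact continuousAt_id.add continuousAt_const
    · exact continuousAt_const.add (continuousAt_const.mul continuousAt_id)
    · exact psi_den_ne ha (by rw [norm_neg]; exact hω.le)
  exact h3.tendsto.comp h2

/-- The main geometric estimate: the component `W = 𝒮̃(p,ε)` lies within
Euclidean distance `3ε` of `p`. -/
theorem stilde_bound {p : ℂ} {ε : ℝ} (hε : 0 < ε) {W : Set (H2 × ℝ)}
    (hW : IsStilde p ε W) : ∀ w ∈ W, ‖(w.1 : ℂ) - p‖ ≤ 3 * ε := by
  obtain ⟨S, ⟨q₁, q₂, c, ⟨hp, hq1n, hq2n, hq12, hd1, hd2⟩, ⟨γ, hiso, hceq, hlim1, hlim2⟩, hSeq⟩,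
    ⟨x₀, hx₀, hWeq⟩, ⟨qb, hqbW, hqbp⟩⟩ := hW
  -- normalize the geodesic
  set a : ℂ := (γ 0 : ℂ) with ha_def
  have ha : ‖a‖ < 1 := (γ 0).2
  set η : ℝ → ℂ := fun u => mphi a ((γ u : ℂ)) with hη_def
  have hn : ∀ u, ‖η u‖ < 1 := fun u => norm_phi_lt ha (γ u).2
  have h0 : η 0 = 0 := by simp [hη_def, mphi, ha_def]
  have hD : ∀ u v, Dfun (η u) (η v) = Real.cosh (u - v) := by
    intro u v
    rw [hη_def]
    simp only []
    rw [D_phi ha (γ u).2 (γ v).2, ← cosh_hdist, hiso u v, Real.cosh_abs]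
  obtain ⟨ω₀, hω₀, hη₀⟩ := line_structure hn h0 hD
  -- identify the endpoints
  have hγψ : ∀ u, (γ u : ℂ) = mpsi a ((Real.tanh (u/2) : ℂ) * ω₀) := by
    intro u
    rw [← hη₀ u, hη_def]
    simp only []
    rw [psi_phi ha (γ u).2.le]
  have hq1ψ : q₁ = mpsi a ω₀ := by
    apply tendsto_nhds_unique hlim1
    have := tendsto_psi_tanh_top ha hω₀
    exact this.congr (fun u => (hγψ u).symm)
  have hq2ψ : q₂ = mpsi a (-ω₀) := by
    apply tendsto_nhds_unique hlim2
    have := tendsto_psi_tanh_bot ha hω₀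
    exact this.congr (fun u => (hγψ u).symm)
  -- the point p in normalized coordinates
  have hvp0 : ‖mphi a p‖ = 1 := norm_phi_eq_one ha hp
  have hppsi0 : mpsi a (mphi a p) = p := psi_phi ha hp.le
  have homega_recover : ∀ ω : ℂ, ‖ω‖ = 1 → ∀ t : ℂ, ω * ((starRingEnd ℂ) ω * t) = t := by
    intro ω hω t
    rw [← mul_assoc, mul_comm ω, conj_mul_self hω, one_mul]
  have hvim0 : ((starRingEnd ℂ) ω₀ * mphi a p).im ≠ 0 := by
    intro h
    have hnv : ‖(starRingEnd ℂ) ω₀ * mphi a p‖ = 1 := by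
      rw [norm_mul, RCLike.norm_conj, hω₀, one_mul, hvp0]
    set v := (starRingEnd ℂ) ω₀ * mphi a p with hv_def
    have hsq : v.re ^ 2 = 1 := by
      have hns := normSq_eq_one hnv
      simp only [normSq_apply] at hns
      nlinarith [hns, h]
    have hre : v.re = 1 ∨ v.re = -1 := by
      rcases mul_eq_zero.mp (by linear_combination hsq : (v.re - 1) * (v.re + 1) = (0:ℝ)) with
        h1 | h1
      · left; linarith [sub_eq_zero.mp h1]
      · right; linarith
    have hphip : mphi a p = ω₀ * v := (homega_recover ω₀ hω₀ _).symm
    rcases hre with h1 | h1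
    · have hv1 : v = 1 := by
        apply Complex.ext
        · simpa using h1
        · simpa using h
      have : p = q₁ := by
        rw [hq1ψ, ← hppsi0, hphip, hv1, mul_one]
      rw [this] at hd1
      simp at hd1
      linarith
    · have hv1 : v = -1 := by
        apply Complex.ext
        · simpa using h1
        · simpa using h
      have : p = q₂ := by
        rw [hq2ψ, ← hppsi0, hphip, hv1]
        norm_num
      rw [this] at hd2
      simp at hd2
      linarith
  -- the membership characterization of `c` (for `ω₀`)
  have hmem₀ : ∀ z : ℂ, ‖z‖ < 1 →
      ((((starRingEnd ℂ) ω₀ * mphi a z).im = 0) ↔ ∃ u : ℝ, (γ u : ℂ) = z) := by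
    intro z hz
    constructor
    · intro h
      set vz := (starRingEnd ℂ) ω₀ * mphi a z with hvz
      have hvznorm : ‖vz‖ < 1 := by
        rw [hvz, norm_mul, RCLike.norm_conj, hω₀, one_mul]
        exact norm_phi_lt ha hz
      set x := vz.re with hx
      have hvzx : vz = (x : ℂ) := by
        apply Complex.ext
        · simp [hx]
        · simpa using h
      have hxlt : |x| < 1 := by
        calc |x| ≤ ‖vz‖ := Complex.abs_re_le_norm vz
          _ < 1 := hvznorm
      have hx1 : -1 < x := by have := abs_lt.mp hxlt; exact this.1
      have hx2 : x < 1 := (abs_lt.mp hxlt).2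
      refine ⟨Real.log ((1+x)/(1-x)), ?_⟩
      rw [hγψ, tanh_surj hx1 hx2]
      have h9 : (x:ℂ) * ω₀ = mphi a z := by
        rw [← hvzx, hvz, mul_comm]
        exact homega_recover ω₀ hω₀ _
      rw [h9, psi_phi ha hz.le]
    · rintro ⟨u, hu⟩
      rw [← hu]
      have : mphi a ((γ u : ℂ)) = η u := rfl
      rw [this, hη₀ u, ← mul_assoc, mul_comm ((starRingEnd ℂ) ω₀), mul_assoc,
        conj_mul_self hω₀, mul_one]
      exact Complex.ofReal_im _
  -- the main separation argument, for the sign-corrected rotation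
  have main : ∀ ω : ℂ, ‖ω‖ = 1 →
      ‖mpsi a ω - p‖ = ε → ‖mpsi a (-ω) - p‖ = ε → mpsi a ω ≠ mpsi a (-ω) →
      (∀ z : ℂ, ‖z‖ < 1 →
        ((((starRingEnd ℂ) ω * mphi a z).im = 0) ↔ ∃ u : ℝ, (γ u : ℂ) = z)) →
      0 < ((starRingEnd ℂ) ω * mphi a p).im →
      ∀ w ∈ W, ‖(w.1 : ℂ) - p‖ ≤ 3 * ε := by
    intro ω hω hq1' hq2' hqne' hmem hvim
    set f : ℂ → ℝ := fun z => ((starRingEnd ℂ) ω * mphi a z).im with hf_def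
    -- continuity of f off the polar set
    set U : Set ℂ := {z : ℂ | 1 - (starRingEnd ℂ) a * z ≠ 0} with hU_def
    have hUopen : IsOpen U := by
      have : U = (fun z => 1 - (starRingEnd ℂ) a * z) ⁻¹' ({0}ᶜ) := rfl
      rw [this]
      exact (isOpen_compl_singleton).preimage
        (continuous_const.sub (continuous_const.mul continuous_id))
    have hfcontU : ContinuousOn f U := by
      have h1 : ContinuousOn (fun z => (z - a)/(1 - (starRingEnd ℂ) a * z)) U := by
        apply ContinuousOn.div
        · exact (continuous_id.sub continuous_const).continuousOn
        · exact (continuous_const.sub (continuous_const.mul continuous_id)).continuousOn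
        · exact fun z hz => hz
      exact Complex.continuous_im.comp_continuousOn (continuousOn_const.mul h1)
    have hballU : Metric.ball (0:ℂ) 1 ⊆ U := by
      intro z hz
      exact phi_den_ne ha (le_of_lt (by rwa [mem_ball_zero_iff] at hz))
    have hpU : p ∈ U := phi_den_ne ha hp.le
    -- the two sides
    set Opos : Set ℂ := {z : ℂ | ‖z‖ < 1 ∧ 0 < f z} with hOpos_def
    set Oneg : Set ℂ := {z : ℂ | ‖z‖ < 1 ∧ f z < 0} with hOneg_def
    have hOpos_eq : Opos = Metric.ball (0:ℂ) 1 ∩ f ⁻¹' (Ioi 0) := by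
      ext z; simp [hOpos_def, mem_ball_zero_iff]
    have hOneg_eq : Oneg = Metric.ball (0:ℂ) 1 ∩ f ⁻¹' (Iio 0) := by
      ext z; simp [hOneg_def, mem_ball_zero_iff]
    have hOpos_open : IsOpen Opos := by
      rw [hOpos_eq]
      exact (hfcontU.mono hballU).isOpen_inter_preimage Metric.isOpen_ball isOpen_Ioi
    have hOneg_open : IsOpen Oneg := by
      rw [hOneg_eq]
      exact (hfcontU.mono hballU).isOpen_inter_preimage Metric.isOpen_ball isOpen_Iio
    -- the model parametrisation
    set χ : ℂ → ℂ := fun w => mpsi a (ω * w) with hχ_def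
    have hnormmul : ∀ w : ℂ, ‖ω * w‖ = ‖w‖ := by
      intro w; rw [norm_mul, hω, one_mul]
    have hfχ : ∀ w : ℂ, ‖w‖ ≤ 1 → f (χ w) = w.im := by
      intro w hw
      have : mphi a (mpsi a (ω * w)) = ω * w := phi_psi ha (by rwa [hnormmul])
      rw [hf_def, hχ_def]
      simp only []
      rw [this, ← mul_assoc, conj_mul_self hω, one_mul]
    have himg : Opos = χ '' {w : ℂ | ‖w‖ < 1 ∧ 0 < w.im} := by
      ext z
      constructor
      · rintro ⟨hz1, hz2⟩
        refine ⟨(starRingEnd ℂ) ω * mphi a z, ⟨?_, hz2⟩, ?_⟩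
        · rw [norm_mul, RCLike.norm_conj, hω, one_mul]
          exact norm_phi_lt ha hz1
        · rw [hχ_def]
          simp only []
          rw [homega_recover ω hω, psi_phi ha hz1.le]
      · rintro ⟨w, ⟨hw1, hw2⟩, rfl⟩
        refine ⟨norm_psi_lt ha (by rwa [hnormmul]), ?_⟩
        rw [hfχ w hw1.le]
        exact hw2
    have hχcont : ContinuousOn χ {w : ℂ | ‖w‖ ≤ 1} := by
      rw [hχ_def]
      apply ContinuousOn.div
      · exact ((continuous_const.mul continuous_id).add continuous_const).continuousOn
      · exact (continuous_const.add
          (continuous_const.mul (continuous_const.mul continuous_id))).continuousOn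
      · intro w hw
        exact psi_den_ne ha (by rw [hnormmul]; exact hw)
    have hOposPre : IsPreconnected Opos := by
      rw [himg]
      apply IsPreconnected.image
      · have hconv : Convex ℝ {w : ℂ | ‖w‖ < 1 ∧ 0 < w.im} := by
          have : {w : ℂ | ‖w‖ < 1 ∧ 0 < w.im}
              = Metric.ball (0:ℂ) 1 ∩ (⇑Complex.imLm) ⁻¹' (Ioi 0) := by
            ext w; simp [mem_ball_zero_iff, Complex.imLm]
          rw [this]
          exact (convex_ball 0 1).inter ((convex_Ioi (0:ℝ)).linear_preimage Complex.imLm)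
        exact hconv.isPreconnected
      · exact hχcont.mono (fun w hw => hw.1.le)
    -- transfer to H2 × ℝ
    set P₁ : Set (H2 × ℝ) := (fun x : H2 × ℝ => (x.1 : ℂ)) ⁻¹' Opos with hP₁_def
    set P₂ : Set (H2 × ℝ) := (fun x : H2 × ℝ => (x.1 : ℂ)) ⁻¹' Oneg with hP₂_def
    have hcont1 : Continuous (fun x : H2 × ℝ => (x.1 : ℂ)) :=
      continuous_subtype_val.comp continuous_fst
    have hP₁open : IsOpen P₁ := hOpos_open.preimage hcont1
    have hP₂open : IsOpen P₂ := hOneg_open.preimage hcont1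
    have hdisj : Disjoint P₁ P₂ := by
      rw [Set.disjoint_iff]
      rintro x ⟨h1, h2⟩
      exact absurd h1.2 (not_lt.2 h2.2.le)
    -- P₁ is preconnected via the embedding into ℂ × ℝ
    have hP₁pre : IsPreconnected P₁ := by
      set e : H2 × ℝ → ℂ × ℝ := Prod.map (Subtype.val) id with he_def
      have he : Topology.IsEmbedding e :=
        Topology.IsEmbedding.subtypeVal.prodMap Topology.IsEmbedding.id
      have heq : e '' P₁ = Opos ×ˢ (univ : Set ℝ) := by
        ext ⟨z, t⟩
        constructor
        · rintro ⟨x, hx, hxe⟩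
          rw [← hxe]
          exact ⟨hx, trivial⟩
        · rintro ⟨hz, -⟩
          exact ⟨(⟨z, hz.1⟩, t), hz, rfl⟩
      have := (he.isInducing.isPreconnected_image (s := P₁))
      rw [heq] at this
      exact this.mp (hOposPre.prod isPreconnected_univ)
    -- W lies in P₁ ∪ P₂
    have hnotc : ∀ x : H2 × ℝ, x ∈ Set.univ \ S → f (x.1 : ℂ) ≠ 0 := by
      rintro x ⟨-, hxS⟩ hzero
      apply hxS
      rw [hSeq]
      obtain ⟨u, hu⟩ := (hmem _ x.1.2).mp hzero
      refine ⟨?_, trivial⟩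
      rw [hceq]
      exact ⟨u, Subtype.ext hu⟩
    have hWsub : W ⊆ Set.univ \ S := by rw [hWeq]; exact connectedComponentIn_subset _ _
    have hWpre : IsPreconnected W := by rw [hWeq]; exact isPreconnected_connectedComponentIn
    have hWcover : W ⊆ P₁ ∪ P₂ := by
      intro x hx
      rcases lt_trichotomy (f (x.1 : ℂ)) 0 with h | h | h
      · exact Or.inr ⟨x.1.2, h⟩
      · exact absurd h (hnotc x (hWsub hx))
      · exact Or.inl ⟨x.1.2, h⟩
    have hWor := hWpre.subset_or_subset hP₁open hP₂open hdisj hWcover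
    -- near p, f is positive
    have hfp : ContinuousAt f p := hfcontU.continuousAt (hUopen.mem_nhds hpU)
    obtain ⟨V, hV, hVsub⟩ := Metric.mem_nhds_iff.mp
      (hfp.preimage_mem_nhds (isOpen_Ioi.mem_nhds hvim))
    -- get a point of W near p
    have hqbcl : qb ∈ closure (emb '' W) := hqbW.1
    have hop : IsOpen ((Metric.ball p V) ×ˢ (univ : Set EReal)) :=
      Metric.isOpen_ball.prod isOpen_univ
    have hqbo : qb ∈ (Metric.ball p V) ×ˢ (univ : Set EReal) := by
      refine ⟨?_, trivial⟩
      rw [hqbp]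
      exact Metric.mem_ball_self hV
    obtain ⟨y, hyo, ⟨w', hw'W, rfl⟩⟩ := mem_closure_iff.mp hqbcl _ hop hqbo
    have hw'P₁ : w' ∈ P₁ := by
      refine ⟨w'.1.2, ?_⟩
      have : (w'.1 : ℂ) ∈ Metric.ball p V := hyo.1
      exact hVsub this
    have hWP₁ : W ⊆ P₁ := by
      rcases hWor with h | h
      · exact h
      · exfalso
        have := h hw'W
        exact absurd hw'P₁.2 (not_lt.2 this.2.le)
    -- the frontier bound
    set Kup : Set ℂ := {w : ℂ | ‖w‖ ≤ 1 ∧ 0 ≤ w.im} with hKup_def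
    have hKcomp : IsCompact Kup := by
      have : Kup = Metric.closedBall (0:ℂ) 1 ∩ {w : ℂ | 0 ≤ w.im} := by
        ext w; simp [hKup_def, mem_closedBall_zero_iff]
      rw [this]
      exact (isCompact_closedBall 0 1).inter_right
        (isClosed_Ici.preimage Complex.continuous_im)
    have himgK : IsCompact (χ '' Kup) :=
      hKcomp.image_of_continuousOn (hχcont.mono (fun w hw => hw.1))
    have hclosOsub : closure Opos ⊆ χ '' Kup := by
      apply closure_minimal _ himgK.isClosed
      rw [himg]
      exact image_mono (fun w hw => ⟨hw.1.le, hw.2.le⟩)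
    have hppsi' : mpsi a (ω * ((starRingEnd ℂ) ω * mphi a p)) = p := by
      rw [homega_recover ω hω, psi_phi ha hp.le]
    have hvpnorm' : ‖(starRingEnd ℂ) ω * mphi a p‖ = 1 := by
      rw [norm_mul, RCLike.norm_conj, hω, one_mul, hvp0]
    have hfront : ∀ z ∈ frontier Opos, ‖z - p‖ ≤ 3 * ε := by
      intro z hzf
      have hzcl : z ∈ closure Opos := hzf.1
      have hznot : z ∉ Opos := by
        intro h
        exact hzf.2 (by rwa [hOpos_open.interior_eq])
      obtain ⟨w, ⟨hw1, hw2⟩, rfl⟩ := hclosOsub hzcl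
      by_cases him0 : w.im = 0
      · -- on the geodesic: chord bound
        set x := w.re with hx_def
        have hwx : w = (x : ℂ) := by
          apply Complex.ext
          · simp [hx_def]
          · simpa using him0
        have hx1 : -1 ≤ x := by
          have := Complex.abs_re_le_norm w
          have := abs_le.mp (le_trans this hw1)
          exact this.1
        have hx2 : x ≤ 1 := by
          have := Complex.abs_re_le_norm w
          exact (abs_le.mp (le_trans this hw1)).2
        have hcb := chord_bound ha hω hx1 hx2
        have htri : ‖mpsi a ω - mpsi a (-ω)‖ ≤ 2 * ε := by
          calc ‖mpsi a ω - mpsi a (-ω)‖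
              = ‖(mpsi a ω - p) + (p - mpsi a (-ω))‖ := by ring_nf
            _ ≤ ‖mpsi a ω - p‖ + ‖p - mpsi a (-ω)‖ := norm_add_le _ _
            _ = ε + ε := by rw [hq1', norm_sub_rev, hq2']
            _ = 2 * ε := by ring
        calc ‖χ w - p‖ = ‖(mpsi a (ω * (x:ℂ)) - mpsi a ω) + (mpsi a ω - p)‖ := by
              rw [hχ_def]; simp only []; rw [hwx]; ring_nf
          _ ≤ ‖mpsi a (ω * (x:ℂ)) - mpsi a ω‖ + ‖mpsi a ω - p‖ := norm_add_le _ _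
          _ ≤ 2 * ε + ε := add_le_add (le_trans hcb htri) (le_of_eq hq1')
          _ = 3 * ε := by ring
      · -- on the circle arc
        have hwn1 : ‖w‖ = 1 := by
          rcases hw1.lt_or_eq with h | h
          · exfalso
            apply hznot
            refine ⟨norm_psi_lt ha (by rwa [hnormmul]), ?_⟩
            rw [hfχ w hw1]
            rcases hw2.lt_or_eq with h2 | h2
            · exact h2
            · exact absurd h2.symm him0
          · exact h
        have := arc_bound ha hω hp hq1' hq2' hqne' hvpnorm' hvim hppsi' w hwn1 hw2
        calc ‖χ w - p‖ ≤ ε := this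
          _ ≤ 3 * ε := by linarith
    have hbound := vert_bound hOpos_open (fun z hz => hz.1) hfront
    intro w hw
    exact hbound _ (hWP₁ hw)
  -- apply `main` with the correctly-oriented rotation
  rcases lt_trichotomy 0 (((starRingEnd ℂ) ω₀ * mphi a p).im) with hpos | hzero | hneg
  · exact main ω₀ hω₀ (by rw [← hq1ψ]; exact hd1) (by rw [← hq2ψ]; exact hd2)
      (by rw [← hq1ψ, ← hq2ψ]; exact hq12) hmem₀ hpos
  · exact absurd hzero.symm hvim0
  · apply main (-ω₀) (by rw [norm_neg]; exact hω₀)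
      (by rw [← hq2ψ]; exact hd2)
      (by rw [neg_neg, ← hq1ψ]; exact hd1)
      (by rw [neg_neg, ← hq1ψ, ← hq2ψ]; exact (Ne.symm hq12))
      ?_ ?_
    · intro z hz
      rw [← hmem₀ z hz]
      constructor
      · intro h
        have : ((starRingEnd ℂ) ω₀ * mphi a z).im
            = -(((starRingEnd ℂ) (-ω₀) * mphi a z).im) := by
          rw [map_neg]
          simp [neg_mul]
        rw [this, h, neg_zero]
      · intro h
        have : ((starRingEnd ℂ) (-ω₀) * mphi a z).im
            = -(((starRingEnd ℂ) ω₀ * mphi a z).im) := by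
          rw [map_neg]
          simp [neg_mul]
        rw [this, h, neg_zero]
    · have : ((starRingEnd ℂ) (-ω₀) * mphi a p).im
          = -(((starRingEnd ℂ) ω₀ * mphi a p).im) := by
        rw [map_neg]
        simp [neg_mul]
      rw [this]
      linarith


end OSAux

/-- Claim `openslab` of the paper. In the setting of the proof of the
classification of vertical asymptotic boundary components: `M` is a properly immersed
translator with compact boundary whose vertical asymptotic boundary is a proper family of
disjoint immersed continuous curves, `γ` is a connected component of `∂∞^v M` with `M ∪ γ`
a continuous surface with boundary, `(p, t) ∈ γ` is isolated in the vertical direction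
(`{(p,t)} = γ ∩ ({p} × (t-ρ, t+ρ))`), the Euclidean distance from `∂M` to the boundary
cylinder exceeds `ν`, and `ε₁ > 0`, `δ ∈ (0, ρ)` are such that for every `ε ≤ ε₁` the
connected component `γ_ε` of `∂∞ M_ε` through `(p,t)` is the only component of `∂∞^v M`
meeting the closed slab `∂∞ℍ² × [t-δ, t+δ]`, where `M_ε` is the connected component of
`M ∩ 𝒮̃(p, ε)` containing `(p,t)` in its asymptotic boundary. Then there is `0 < ε̄ < ε₁`
such that `M_ε̄ ⊆ ℍ² × (t-δ, t+δ)`; in particular `γ_ε̄` is all of the asymptotic boundary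
of `M_ε̄`, and `γ_ε̄ ⊆ 𝒮̃(p, ε̄) ∩ (ℍ² × (t-δ, t+δ))` at infinity. -/
theorem claim_openslab
    (G : GeomBackground) (M : G.Surface)
    (hprop : G.IsProperlyImmersed M) (htr : IsTranslator G M)
    (hbd : IsCompact (G.bdry M))
    (hfam : IsProperFamilyOfDisjointCurves (vBdry (G.carrier M)))
    (γ : Set CPT) (hγ : IsConnCompOf γ (vBdry (G.carrier M)))
    (hsurf : IsTopSurfaceWithBoundary (emb '' G.carrier M ∪ γ))
    (p : ℂ) (t ρ : ℝ) (hρ : 0 < ρ)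
    (hpt : ((p, (t : EReal)) : CPT) ∈ γ)
    (hisol : γ ∩ {q : CPT | q.1 = p ∧ ∃ u : ℝ, q.2 = (u : EReal) ∧ t - ρ < u ∧ u < t + ρ}
      = {((p, (t : EReal)) : CPT)})
    (ν : ℝ) (hν : 0 < ν) (hνbd : ∀ x ∈ G.bdry M, ν < 1 - ‖(x.1 : ℂ)‖)
    (ε₁ δ : ℝ) (hε₁ : 0 < ε₁) (hδ : 0 < δ) (hδρ : δ < ρ)
    (hchoice : ∀ ε : ℝ, 0 < ε → ε ≤ ε₁ →
      ∀ W Mε : Set (H2 × ℝ), IsStilde p ε W →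
        IsConnCompOf Mε (G.carrier M ∩ W) →
        ((p, (t : EReal)) : CPT) ∈ asympBdry Mε →
        ∀ C : Set CPT, IsConnCompOf C (vBdry (G.carrier M)) →
          (C ∩ {q : CPT | ‖q.1‖ = 1 ∧
            ∃ u : ℝ, q.2 = (u : EReal) ∧ t - δ ≤ u ∧ u ≤ t + δ}).Nonempty →
          C = connectedComponentIn (asympBdry Mε) ((p, (t : EReal)) : CPT)) :
    ∃ εb : ℝ, 0 < εb ∧ εb < ε₁ ∧
      ∀ W Mε : Set (H2 × ℝ), IsStilde p εb W →
        IsConnCompOf Mε (G.carrier M ∩ W) →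
        ((p, (t : EReal)) : CPT) ∈ asympBdry Mε →
        Mε ⊆ (Set.univ : Set H2) ×ˢ Set.Ioo (t - δ) (t + δ) ∧
        connectedComponentIn (asympBdry Mε) ((p, (t : EReal)) : CPT) = asympBdry Mε ∧
        asympBdry Mε ⊆ closure (emb '' W) ∩
          {q : CPT | ∃ u : ℝ, q.2 = (u : EReal) ∧ t - δ < u ∧ u < t + δ} := by
  classical
  set X := G.carrier M with hX_def
  obtain ⟨x₀γ, hx₀γ, hγeq0⟩ := hγ
  have hptv : ((p, (t : EReal)) : CPT) ∈ vBdry X := by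
    have h := hpt
    rw [hγeq0] at h
    exact connectedComponentIn_subset _ _ h
  have hp1 : ‖p‖ = 1 := hptv.2.1
  set δ₂ := δ / 2 with hδ₂_def
  have hδ₂pos : 0 < δ₂ := by positivity
  have hδ₂lt : δ₂ < δ := by rw [hδ₂_def]; linarith
  have hγcc : IsConnCompOf γ (vBdry X) := ⟨x₀γ, hx₀γ, hγeq0⟩
  have hγslab : (γ ∩ {q : CPT | ‖q.1‖ = 1 ∧
      ∃ u : ℝ, q.2 = (u : EReal) ∧ t - δ ≤ u ∧ u ≤ t + δ}).Nonempty :=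
    ⟨((p, (t : EReal)) : CPT), hpt, hp1, t, rfl, by linarith, by linarith⟩
  -- Step 1: find εb such that every admissible piece Mε stays in the closed small slab
  have step1 : ∃ εb : ℝ, 0 < εb ∧ εb < ε₁ ∧
      ∀ W Mε : Set (H2 × ℝ), IsStilde p εb W →
        IsConnCompOf Mε (X ∩ W) →
        ((p, (t : EReal)) : CPT) ∈ asympBdry Mε →
        Mε ⊆ (Set.univ : Set H2) ×ˢ Set.Icc (t - δ₂) (t + δ₂) := by
    by_contra hcon
    push_neg at hcon
    have key : ∀ r : ℝ, 0 < r → ∃ z : H2 × ℝ, z ∈ X ∧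
        (z.2 = t + δ₂ ∨ z.2 = t - δ₂) ∧ ‖(z.1 : ℂ) - p‖ < r := by
      intro r hr
      set εb := min (ε₁ / 2) (r / 6) with hεb_def
      have hεbpos : 0 < εb := lt_min (by linarith) (by linarith)
      have hεblt : εb < ε₁ := by
        calc εb ≤ ε₁ / 2 := min_le_left _ _
          _ < ε₁ := by linarith
      obtain ⟨W, Mε, hW, hMε, hptMε, hnsub⟩ := hcon εb hεbpos hεblt
      rw [Set.not_subset] at hnsub
      obtain ⟨x, hxMε, hxout⟩ := hnsub
      have hxout2 : x.2 ∉ Set.Icc (t - δ₂) (t + δ₂) := fun h => hxout ⟨trivial, h⟩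
      obtain ⟨x₁, hx₁, hMεeq⟩ := hMε
      have hMεpre : IsPreconnected Mε := by
        rw [hMεeq]; exact isPreconnected_connectedComponentIn
      have hMεsub : Mε ⊆ X ∩ W := by
        rw [hMεeq]; exact connectedComponentIn_subset _ _
      have hmid : ∃ m : H2 × ℝ, m ∈ Mε ∧ t - δ₂ < m.2 ∧ m.2 < t + δ₂ := by
        have hcl : ((p, (t : EReal)) : CPT) ∈ closure (emb '' Mε) := hptMε.1
        set o : Set CPT :=
          Prod.snd ⁻¹' (Set.Ioo ((t - δ₂ : ℝ) : EReal) ((t + δ₂ : ℝ) : EReal)) with ho_def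
        have hoopen : IsOpen o := isOpen_Ioo.preimage continuous_snd
        have hpo : ((p, (t : EReal)) : CPT) ∈ o := by
          simp only [ho_def, Set.mem_preimage, Set.mem_Ioo]
          constructor
          · show ((t - δ₂ : ℝ) : EReal) < ((t : ℝ) : EReal)
            exact_mod_cast (by linarith : t - δ₂ < t)
          · show ((t : ℝ) : EReal) < ((t + δ₂ : ℝ) : EReal)
            exact_mod_cast (by linarith : t < t + δ₂)
        obtain ⟨y, hyo, ⟨m, hm, rfl⟩⟩ := mem_closure_iff.mp hcl o hoopen hpo
        simp only [ho_def, Set.mem_preimage, Set.mem_Ioo] at hyo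
        have hyo1 : ((t - δ₂ : ℝ) : EReal) < ((m.2 : ℝ) : EReal) := hyo.1
        have hyo2 : ((m.2 : ℝ) : EReal) < ((t + δ₂ : ℝ) : EReal) := hyo.2
        refine ⟨m, hm, ?_, ?_⟩
        · exact_mod_cast hyo1
        · exact_mod_cast hyo2
      obtain ⟨m, hmMε, hm1, hm2⟩ := hmid
      have hsnd : ContinuousOn (fun z : H2 × ℝ => z.2) Mε := continuous_snd.continuousOn
      have hIVT := hMεpre.intermediate_value hmMε hxMε hsnd
      have hIVT2 := hMεpre.intermediate_value hxMε hmMε hsnd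
      have hy : ∃ y : H2 × ℝ, y ∈ Mε ∧ (y.2 = t + δ₂ ∨ y.2 = t - δ₂) := by
        rw [Set.mem_Icc, not_and_or] at hxout2
        rcases hxout2 with h | h
        · push_neg at h
          have hmem : t - δ₂ ∈ Set.Icc x.2 m.2 := ⟨by linarith, by linarith⟩
          obtain ⟨y, hyMε, hy2⟩ := hIVT2 hmem
          exact ⟨y, hyMε, Or.inr hy2⟩
        · push_neg at h
          have hmem : t + δ₂ ∈ Set.Icc m.2 x.2 := ⟨by linarith, by linarith⟩
          obtain ⟨y, hyMε, hy2⟩ := hIVT hmem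
          exact ⟨y, hyMε, Or.inl hy2⟩
      obtain ⟨y, hyMε, hy2⟩ := hy
      refine ⟨y, (hMεsub hyMε).1, hy2, ?_⟩
      have hbd := OSAux.stilde_bound hεbpos hW y (hMεsub hyMε).2
      have hεbr : εb ≤ r / 6 := min_le_right _ _
      calc ‖(y.1 : ℂ) - p‖ ≤ 3 * εb := hbd
        _ ≤ 3 * (r / 6) := by linarith
        _ < r := by linarith
    have dich : (∀ r : ℝ, 0 < r → ∃ z : H2 × ℝ, z ∈ X ∧ z.2 = t + δ₂ ∧ ‖(z.1 : ℂ) - p‖ < r) ∨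
        (∀ r : ℝ, 0 < r → ∃ z : H2 × ℝ, z ∈ X ∧ z.2 = t - δ₂ ∧ ‖(z.1 : ℂ) - p‖ < r) := by
      by_contra hno
      push_neg at hno
      obtain ⟨⟨r₁, hr₁, hno₁⟩, ⟨r₂, hr₂, hno₂⟩⟩ := hno
      obtain ⟨z, hzX, hz2, hzr⟩ := key (min r₁ r₂) (lt_min hr₁ hr₂)
      rcases hz2 with h | h
      · exact absurd hzr (not_lt.2 (le_trans (min_le_left _ _) (hno₁ z hzX h)))
      · exact absurd hzr (not_lt.2 (le_trans (min_le_right _ _) (hno₂ z hzX h)))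
    have finish : ∀ s : ℝ, s ≠ 0 → |s| < ρ → t - δ ≤ t + s → t + s ≤ t + δ →
        (∀ r : ℝ, 0 < r → ∃ z : H2 × ℝ, z ∈ X ∧ z.2 = t + s ∧ ‖(z.1 : ℂ) - p‖ < r) →
        False := by
      intro s hs0 hsρ hsl hsu hpts
      have hclX : ((p, ((t + s : ℝ) : EReal)) : CPT) ∈ closure (emb '' X) := by
        rw [mem_closure_iff]
        intro o hoopen hpo
        obtain ⟨U1, U2, hU1, hU2, hpU1, hptU2, hsubo⟩ := isOpen_prod_iff.mp hoopen p _ hpo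
        obtain ⟨r, hr, hball⟩ := Metric.isOpen_iff.mp hU1 p hpU1
        obtain ⟨z, hzX, hz2, hzr⟩ := hpts r hr
        refine ⟨emb z, hsubo ⟨?_, ?_⟩, ⟨z, hzX, rfl⟩⟩
        · apply hball
          rw [Metric.mem_ball, dist_eq_norm]
          exact hzr
        · show ((z.2 : ℝ) : EReal) ∈ U2
          rw [hz2]
          exact hptU2
      have hnr : ((p, ((t + s : ℝ) : EReal)) : CPT) ∉ Set.range emb := by
        rintro ⟨w, hw⟩
        have h1 : (w.1 : ℂ) = p := congrArg Prod.fst hw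
        have h2 := w.1.2
        rw [h1, hp1] at h2
        exact lt_irrefl _ h2
      have hvB : ((p, ((t + s : ℝ) : EReal)) : CPT) ∈ vBdry X :=
        ⟨⟨hclX, hnr⟩, hp1, EReal.coe_ne_top _, EReal.coe_ne_bot _⟩
      obtain ⟨W, Mε, hW, hMε, hptMε, -⟩ := hcon (ε₁ / 2) (by linarith) (by linarith)
      have hch1 := hchoice (ε₁ / 2) (by linarith) (by linarith) W Mε hW hMε hptMε
      have hγK := hch1 γ hγcc hγslab
      have hC'K := hch1 (connectedComponentIn (vBdry X) ((p, ((t + s : ℝ) : EReal)) : CPT))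
        ⟨_, hvB, rfl⟩
        ⟨_, mem_connectedComponentIn hvB, hp1, t + s, rfl, hsl, hsu⟩
      have hins : ((p, ((t + s : ℝ) : EReal)) : CPT) ∈ γ := by
        rw [hγK, ← hC'K]
        exact mem_connectedComponentIn hvB
      have habs := abs_lt.mp hsρ
      have hmem2 : ((p, ((t + s : ℝ) : EReal)) : CPT) ∈ γ ∩
          {q : CPT | q.1 = p ∧ ∃ u : ℝ, q.2 = (u : EReal) ∧ t - ρ < u ∧ u < t + ρ} :=
        ⟨hins, rfl, t + s, rfl, by linarith, by linarith⟩
      rw [hisol] at hmem2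
      have heq := (Prod.ext_iff.mp (Set.mem_singleton_iff.mp hmem2)).2
      have heq2 : ((t + s : ℝ) : EReal) = ((t : ℝ) : EReal) := heq
      have : t + s = t := by exact_mod_cast heq2
      exact hs0 (by linarith)
    rcases dich with h | h
    · exact finish δ₂ hδ₂pos.ne' (by rw [abs_of_pos hδ₂pos]; linarith)
        (by linarith) (by linarith) h
    · refine finish (-δ₂) (by simp [hδ₂pos.ne']) (by rw [abs_neg, abs_of_pos hδ₂pos]; linarith)
        (by linarith) (by linarith) ?_
      intro r hr
      obtain ⟨z, hzX, hz2, hzr⟩ := h r hr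
      exact ⟨z, hzX, by rw [hz2]; ring, hzr⟩
  -- Step 2: conclude
  obtain ⟨εb, hεb0, hεb1, hslab⟩ := step1
  refine ⟨εb, hεb0, hεb1, ?_⟩
  intro W Mε hW hMε hptMε
  have hsub := hslab W Mε hW hMε hptMε
  have hMεsub : Mε ⊆ X ∩ W := by
    obtain ⟨x₁, hx₁, hMεeq⟩ := hMε
    rw [hMεeq]
    exact connectedComponentIn_subset _ _
  have haa : Mε ⊆ (Set.univ : Set H2) ×ˢ Set.Ioo (t - δ) (t + δ) := by
    intro x hx
    have h := (hsub hx).2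
    exact ⟨trivial, ⟨by linarith [h.1], by linarith [h.2]⟩⟩
  have hheights : ∀ q ∈ asympBdry Mε,
      ∃ u : ℝ, q.2 = (u : EReal) ∧ t - δ₂ ≤ u ∧ u ≤ t + δ₂ := by
    intro q hq
    have hcl : q ∈ closure (emb '' Mε) := hq.1
    have hsub2 : emb '' Mε ⊆
        Prod.snd ⁻¹' (Set.Icc ((t - δ₂ : ℝ) : EReal) ((t + δ₂ : ℝ) : EReal)) := by
      rintro _ ⟨m, hm, rfl⟩
      have h := (hsub hm).2
      simp only [Set.mem_preimage, Set.mem_Icc]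
      constructor
      · show ((t - δ₂ : ℝ) : EReal) ≤ ((m.2 : ℝ) : EReal)
        exact_mod_cast h.1
      · show ((m.2 : ℝ) : EReal) ≤ ((t + δ₂ : ℝ) : EReal)
        exact_mod_cast h.2
    have hclosed : IsClosed
        (Prod.snd ⁻¹' (Set.Icc ((t - δ₂ : ℝ) : EReal) ((t + δ₂ : ℝ) : EReal)) : Set CPT) :=
      isClosed_Icc.preimage continuous_snd
    have hqIcc' := closure_minimal hsub2 hclosed hcl
    have hqIcc : ((t - δ₂ : ℝ) : EReal) ≤ q.2 ∧ q.2 ≤ ((t + δ₂ : ℝ) : EReal) := hqIcc'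
    have hqt : q.2 ≠ ⊤ := by
      intro h
      have := hqIcc.2
      rw [h] at this
      exact absurd this (not_le.2 (EReal.coe_lt_top _))
    have hqb : q.2 ≠ ⊥ := by
      intro h
      have := hqIcc.1
      rw [h] at this
      exact absurd this (not_le.2 (EReal.bot_lt_coe _))
    obtain ⟨u, hu⟩ : ∃ u : ℝ, q.2 = (u : EReal) :=
      ⟨q.2.toReal, (EReal.coe_toReal hqt hqb).symm⟩
    rw [hu] at hqIcc
    exact ⟨u, hu, by exact_mod_cast hqIcc.1, by exact_mod_cast hqIcc.2⟩
  have hnorm1 : ∀ q ∈ asympBdry Mε, ‖q.1‖ = 1 := by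
    intro q hq
    have hle : ‖q.1‖ ≤ 1 := by
      have hsub3 : emb '' Mε ⊆ {q' : CPT | ‖q'.1‖ ≤ 1} := by
        rintro _ ⟨m, hm, rfl⟩
        exact m.1.2.le
      have hcl3 : IsClosed {q' : CPT | ‖q'.1‖ ≤ 1} :=
        isClosed_Iic.preimage (continuous_fst.norm)
      exact closure_minimal hsub3 hcl3 hq.1
    rcases hle.lt_or_eq with hlt | heq
    · exfalso
      obtain ⟨u, hu, -, -⟩ := hheights q hq
      apply hq.2
      refine ⟨((⟨q.1, hlt⟩ : H2), u), ?_⟩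
      apply Prod.ext
      · rfl
      · exact hu.symm
    · exact heq
  have hvB : ∀ q ∈ asympBdry Mε, q ∈ vBdry X := by
    intro q hq
    obtain ⟨u, hu, -, -⟩ := hheights q hq
    refine ⟨⟨closure_mono (Set.image_mono (fun m hm => (hMεsub hm).1)) hq.1, hq.2⟩,
      hnorm1 q hq, ?_, ?_⟩
    · rw [hu]; exact EReal.coe_ne_top u
    · rw [hu]; exact EReal.coe_ne_bot u
  have hch := hchoice εb hεb0 (le_of_lt hεb1) W Mε hW hMε hptMε
  have hbb : connectedComponentIn (asympBdry Mε) ((p, (t : EReal)) : CPT) = asympBdry Mε := by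
    apply Set.Subset.antisymm (connectedComponentIn_subset _ _)
    intro q hq
    have hqvB := hvB q hq
    obtain ⟨u, hu, hu1, hu2⟩ := hheights q hq
    have hC := hch (connectedComponentIn (vBdry X) q) ⟨q, hqvB, rfl⟩
      ⟨q, mem_connectedComponentIn hqvB, hnorm1 q hq, u, hu, by linarith, by linarith⟩
    rw [← hC]
    exact mem_connectedComponentIn hqvB
  have hcc : asympBdry Mε ⊆ closure (emb '' W) ∩
      {q : CPT | ∃ u : ℝ, q.2 = (u : EReal) ∧ t - δ < u ∧ u < t + δ} := by
    intro q hq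
    constructor
    · exact closure_mono (Set.image_mono (fun m hm => (hMεsub hm).2)) hq.1
    · obtain ⟨u, hu, h1, h2⟩ := hheights q hq
      exact ⟨u, hu, by linarith, by linarith⟩
  exact ⟨haa, hbb, hcc⟩
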